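/- arXiv:2102.10257 — 8 statements merged into one kernel-verified Lean document; each statement's English description precedes it below -/
import Mathlib

section
/- Let λ₀ > 0, λ ∈ (0, λ₀], δ₀ ∈ (0,1), ε > 0, y₀ > 0. Let K : [ελ₀^{-1}, ∞) → ℝ with δ₀ < K(r) < δ₀^{-1}, K continuously differentiable with ‖K′‖_{L¹([ελ₀^{-1},∞))} ≤ δ₀^{-1}, and let G satisfy ‖G‖_{L¹([ελ^{-1},∞))} ≤ δ₀^{-1}λ for all λ ∈ (0,λ₀]. Consider the ODE y″ − λ²K²(r)y + G(r)y = 0 for r > ελ^{-1} with y(ελ^{-1}) = y₀ and y′(ελ^{-1}) = y₁ ∈ (0, δ₀^{-1}λy₀). Then: (i) for any solution y with y > 0 and y′ > 0 on its domain, there exist constants 0 < c < C depending only on δ₀ and ε (independent of λ ∈ (0,λ₀]) such that c y₀ e^{λ∫_{ε/λ}^{r} K(τ)dτ} ≤ y(r) ≤ C y₀ e^{λ∫_{ε/λ}^{r} K(τ)dτ} for all r ≥ ελ^{-1}; (ii) if in addition δ₀ < 1 − λ^{-2}K^{-2}(r)G(r) < δ₀^{-1} for all r, then the solution satisfies y >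 0, y′ > 0, and c(y₁ + y₀λ(e^{λ∫_{ε/λ}^{r}K(τ)dτ} − 1)) ≤ y′(r) ≤ C(y₁ + y₀λ(e^{λ∫_{ε/λ}^{r}K(τ)dτ} − 1)) for constants 0 < c < C independent of λ. -/
/-!
Writing `u = y' / y` and `k = λ K`, the equation becomes the Riccati equation
`u' = k² - G - u²`, so `w = u - k` solves the linear equation `w' = -(u + k) w - (G + k')`,
whose damping `u + k` is at least `λ δ₀`. Pairing it with the solution `n` of the adjoint
problem `n' = (u + k) n - 1`, `n b = 0`, which satisfies `0 ≤ n ≤ (λ δ₀)⁻¹`, gives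
`log (y b / y a) - ∫ₐᵇ k = n a * w a - ∫ₐᵇ n (G + k')`; both terms are `O(δ₀⁻²)` uniformly in `λ`,
which is (i). For (ii), `(y y')' = y'² + (k² - G) y² ≥ 0` keeps `y` and `y'` positive, and by (i)
`y'' = (k² - G) y` is comparable to `λ` times the derivative of `exp (∫ₐʳ k)`.
-/

open MeasureTheory Set Real Filter

theorem monotoneOn_Ici_of_hasDerivWithinAt_nonneg {f f' : ℝ → ℝ} {a : ℝ}
    (hf : ∀ x ∈ Ici a, HasDerivWithinAt f (f' x) (Ici a) x) (hf' : ∀ x ∈ Ioi a, 0 ≤ f' x) :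
    MonotoneOn f (Ici a) :=
  monotoneOn_of_hasDerivWithinAt_nonneg (convex_Ici a)
    (fun x hx => (hf x hx).continuousWithinAt)
    (by simpa using fun x hx => (hf x (le_of_lt hx)).mono Ioi_subset_Ici_self)
    (by simpa using hf')

theorem hasDerivWithinAt_integral_Ici {k : ℝ → ℝ} {a r : ℝ} (hk : ContinuousOn k (Ici a))
    (hr : r ∈ Ici a) : HasDerivWithinAt (fun x => ∫ t in a..x, k t) (k r) (Ici a) r := by
  have hr' : r ∈ Icc a (r + 1) := ⟨hr, by linarith⟩
  have : Fact (r ∈ Icc a (r + 1)) := ⟨hr'⟩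
  have hkI : ContinuousOn k (Icc a (r + 1)) := hk.mono Icc_subset_Ici_self
  refine (intervalIntegral.integral_hasDerivWithinAt_right (s := Icc a (r + 1))
    ((hkI.mono (Icc_subset_Icc le_rfl hr'.2)).intervalIntegrable_of_Icc hr)
    (hkI.stronglyMeasurableAtFilter_nhdsWithin measurableSet_Icc r)
    (hkI r hr')).mono_of_mem_nhdsWithin ?_
  rw [← Ici_inter_Iic]
  exact inter_mem_nhdsWithin _ (Iic_mem_nhds (by linarith))

theorem sub_eq_of_hasDerivWithinAt_adjoint {D w n p h : ℝ → ℝ} {a b : ℝ} (hab : a ≤ b)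
    (hD : ∀ x ∈ Ici a, HasDerivWithinAt D (w x) (Ici a) x)
    (hw : ∀ x ∈ Ici a, HasDerivWithinAt w (-(p x * w x) - h x) (Ici a) x)
    (hn : ∀ x ∈ Ici a, HasDerivWithinAt n (p x * n x - 1) (Ici a) x)
    (hnb : n b = 0) (hnh : IntervalIntegrable (fun x => n x * h x) volume a b) :
    D b - D a = n a * w a - ∫ x in a..b, n x * h x := by
  have hF : ∀ x ∈ Ici a, HasDerivWithinAt (fun x => D x + n x * w x) (-(n x * h x)) (Ici a) x :=
    fun x hx => ((hD x hx).add ((hn x hx).mul (hw x hx))).congr_deriv (by ring)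
  have hFTC := intervalIntegral.integral_eq_sub_of_hasDerivAt_of_le hab
    (fun x hx => (hF x hx.1).continuousWithinAt.mono Icc_subset_Ici_self)
    (fun x hx => (hF x hx.1.le).hasDerivAt (Ici_mem_nhds hx.1)) hnh.neg
  rw [intervalIntegral.integral_neg, hnb] at hFTC
  linarith

theorem abs_exp_mul_sub_le_inv {P p J : ℝ → ℝ} {a b r μ : ℝ} (hμ : 0 < μ)
    (hP : ∀ x ∈ Ici a, HasDerivWithinAt P (p x) (Ici a) x) (hp : ∀ x ∈ Ioi a, μ ≤ p x)
    (hJ : ∀ x ∈ Ici a, HasDerivWithinAt J (exp (-P x)) (Ici a) x) (har : a ≤ r) (hrb : r ≤ b) :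
    |exp (P r) * (J b - J r)| ≤ μ⁻¹ := by
  have hab : a ≤ b := har.trans hrb
  have hJ_le : J r ≤ J b :=
    monotoneOn_Ici_of_hasDerivWithinAt_nonneg hJ (fun x _ => (exp_pos _).le) har hab hrb
  -- `J + μ⁻¹ exp (-P)` is antitone because `P' ≥ μ`.
  have hN : -(J r + μ⁻¹ * exp (-P r)) ≤ -(J b + μ⁻¹ * exp (-P b)) := by
    refine monotoneOn_Ici_of_hasDerivWithinAt_nonneg
      (fun x hx => ((hJ x hx).add (((hP x hx).neg.exp).const_mul μ⁻¹)).neg) (fun x hx => ?_)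
      har hab hrb
    have := mul_le_mul_of_nonneg_left (hp x hx) (exp_pos (-P x)).le
    simp only [Pi.neg_apply]
    field_simp
    linarith
  rw [abs_of_nonneg (mul_nonneg (exp_pos _).le (sub_nonneg.2 hJ_le))]
  calc exp (P r) * (J b - J r) ≤ exp (P r) * (μ⁻¹ * exp (-P r)) := by
        gcongr
        linarith [mul_pos (inv_pos.2 hμ) (exp_pos (-P b))]
    _ = μ⁻¹ := by rw [mul_left_comm, ← exp_add, add_neg_cancel, exp_zero, mul_one]

theorem abs_integral_mul_le_mul_integral_Ici {n h : ℝ → ℝ} {a b C : ℝ} (hab : a ≤ b)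
    (hn : ContinuousOn n (Icc a b)) (hnC : ∀ x ∈ Icc a b, |n x| ≤ C) (hh : IntegrableOn h (Ici a)) :
    |∫ x in a..b, n x * h x| ≤ C * ∫ x in Ici a, |h x| := by
  have hC : 0 ≤ C := (abs_nonneg _).trans (hnC a ⟨le_rfl, hab⟩)
  have hhI : IntegrableOn h (Icc a b) := hh.mono_set Icc_subset_Ici_self
  rw [intervalIntegral.integral_of_le hab, ← integral_Icc_eq_integral_Ioc]
  calc |∫ x in Icc a b, n x * h x| ≤ ∫ x in Icc a b, |n x * h x| := abs_integral_le_integral_abs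
    _ ≤ ∫ x in Icc a b, C * |h x| := by
        refine setIntegral_mono_on (hhI.continuousOn_mul hn isCompact_Icc).abs
          (hhI.abs.const_mul C) measurableSet_Icc fun x hx => ?_
        rw [abs_mul]
        exact mul_le_mul_of_nonneg_right (hnC x hx) (abs_nonneg _)
    _ ≤ ∫ x in Ici a, C * |h x| :=
        setIntegral_mono_set (hh.abs.const_mul C)
          (Eventually.of_forall fun x => mul_nonneg hC (abs_nonneg _))
          Icc_subset_Ici_self.eventuallyLE
    _ = C * ∫ x in Ici a, |h x| := integral_const_mul C _

theorem abs_log_div_sub_integral_le {y y' k k' g : ℝ → ℝ} {a μ : ℝ} (hμ : 0 < μ)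
    (hy : ∀ r ∈ Ici a, 0 < y r) (hy' : ∀ r ∈ Ici a, 0 ≤ y' r) (hk : ∀ r ∈ Ici a, μ ≤ k r)
    (hyd : ∀ r ∈ Ici a, HasDerivWithinAt y (y' r) (Ici a) r)
    (hy'd : ∀ r ∈ Ici a, HasDerivWithinAt y' ((k r ^ 2 - g r) * y r) (Ici a) r)
    (hkd : ∀ r ∈ Ici a, HasDerivWithinAt k (k' r) (Ici a) r)
    (hg : IntegrableOn g (Ici a)) (hk' : IntegrableOn k' (Ici a)) {b : ℝ} (hab : a ≤ b) :
    |log (y b / y a) - ∫ t in a..b, k t| ≤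
      (|y' a / y a - k a| + ∫ t in Ici a, |g t + k' t|) / μ := by
  set Φ : ℝ → ℝ := fun r => ∫ t in a..r, k t
  set u : ℝ → ℝ := fun r => y' r / y r
  set P : ℝ → ℝ := fun r => log (y r) + Φ r
  set J : ℝ → ℝ := fun r => ∫ t in a..r, exp (-P t)
  set n : ℝ → ℝ := fun r => exp (P r) * (J b - J r)
  have hΦ : ∀ r ∈ Ici a, HasDerivWithinAt Φ (k r) (Ici a) r := fun r hr =>
    hasDerivWithinAt_integral_Ici (fun x hx => (hkd x hx).continuousWithinAt) hr
  have hlog : ∀ r ∈ Ici a, HasDerivWithinAt (fun r => log (y r)) (u r) (Ici a) r :=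
    fun r hr => (hyd r hr).log (hy r hr).ne'
  have hP : ∀ r ∈ Ici a, HasDerivWithinAt P (u r + k r) (Ici a) r :=
    fun r hr => (hlog r hr).add (hΦ r hr)
  have hJ : ∀ r ∈ Ici a, HasDerivWithinAt J (exp (-P r)) (Ici a) r := fun r hr =>
    hasDerivWithinAt_integral_Ici (fun x hx => (hP x hx).continuousWithinAt.neg.rexp) hr
  have hn : ∀ r ∈ Ici a, HasDerivWithinAt n ((u r + k r) * n r - 1) (Ici a) r := by
    intro r hr
    refine ((hP r hr).exp.mul ((hJ r hr).const_sub (J b))).congr_deriv ?_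
    have : exp (P r) * exp (-P r) = 1 := by rw [← exp_add]; simp
    simp only [n]
    linear_combination -this
  have hw : ∀ r ∈ Ici a, HasDerivWithinAt (fun r => u r - k r)
      (-((u r + k r) * (u r - k r)) - (g r + k' r)) (Ici a) r := by
    intro r hr
    refine (((hy'd r hr).div (hyd r hr) (hy r hr).ne').sub (hkd r hr)).congr_deriv ?_
    simp only [u]
    field_simp [(hy r hr).ne']
    ring
  have hp : ∀ x ∈ Ioi a, μ ≤ u x + k x := fun x hx =>
    have hx : x ∈ Ici a := Ioi_subset_Ici_self hx
    le_add_of_nonneg_of_le (div_nonneg (hy' x hx) (hy x hx).le) (hk x hx)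
  have hn_le : ∀ r ∈ Icc a b, |n r| ≤ μ⁻¹ := fun r hr =>
    abs_exp_mul_sub_le_inv hμ hP hp hJ hr.1 hr.2
  have hnc : ContinuousOn n (Icc a b) :=
    fun r hr => (hn r hr.1).continuousWithinAt.mono Icc_subset_Ici_self
  have hh : IntegrableOn (fun r => g r + k' r) (Ici a) := hg.add hk'
  have key : log (y b) - Φ b - (log (y a) - Φ a) =
      n a * (u a - k a) - ∫ x in a..b, n x * (g x + k' x) :=
    sub_eq_of_hasDerivWithinAt_adjoint hab (fun r hr => (hlog r hr).sub (hΦ r hr)) hw hn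
      (by simp [n]) ((intervalIntegrable_iff_integrableOn_Icc_of_le hab).2
        ((hh.mono_set Icc_subset_Ici_self).continuousOn_mul hnc isCompact_Icc))
  have hint := abs_integral_mul_le_mul_integral_Ici hab hnc hn_le hh
  have hna := hn_le a ⟨le_rfl, hab⟩
  have hΦa : Φ a = 0 := intervalIntegral.integral_same
  rw [log_div (hy b hab).ne' (hy a self_mem_Ici).ne', div_eq_inv_mul, mul_add]
  calc |log (y b) - log (y a) - Φ b| = |n a * (u a - k a) - ∫ x in a..b, n x * (g x + k' x)| := by
        rw [← key, hΦa, sub_zero, sub_right_comm]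
    _ ≤ |n a| * |u a - k a| + |∫ x in a..b, n x * (g x + k' x)| := by
        rw [← abs_mul]; exact abs_sub _ _
    _ ≤ _ := by gcongr

theorem sub_pos_of_pos_one_sub_div {s g : ℝ} (hs : 0 < s) (h : 0 < 1 - g / s) : 0 < s - g := by
  rw [one_sub_div hs.ne'] at h
  exact (div_pos_iff_of_pos_right hs).1 h

theorem mul_exp_le_and_le_mul_exp_of_abs_log_div_sub_le {x x₀ L M c C : ℝ} (hx : 0 < x)
    (hx₀ : 0 < x₀) (hc : c ≤ exp (-M)) (hC : exp M ≤ C) (h : |log (x / x₀) - L| ≤ M) :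
    c * x₀ * exp L ≤ x ∧ x ≤ C * x₀ * exp L := by
  have hx_eq : x = x₀ * exp (log (x / x₀)) := by
    rw [exp_log (div_pos hx hx₀), mul_div_cancel₀ _ hx₀.ne']
  obtain ⟨hlo, hhi⟩ := abs_le.1 h
  constructor
  · calc c * x₀ * exp L ≤ exp (-M) * x₀ * exp L := by gcongr
      _ = x₀ * exp (-M + L) := by rw [exp_add]; ring
      _ ≤ x₀ * exp (log (x / x₀)) := by gcongr; linarith
      _ = x := hx_eq.symm
  · calc x = x₀ * exp (log (x / x₀)) := hx_eq
      _ ≤ x₀ * exp (M + L) := by gcongr; linarith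
      _ = exp M * x₀ * exp L := by rw [exp_add]; ring
      _ ≤ C * x₀ * exp L := by gcongr

theorem pos_and_deriv_pos_of_hasDerivWithinAt {y y' q : ℝ → ℝ} {a : ℝ}
    (hyd : ∀ r ∈ Ici a, HasDerivWithinAt y (y' r) (Ici a) r)
    (hy'd : ∀ r ∈ Ici a, HasDerivWithinAt y' (q r * y r) (Ici a) r)
    (hq : ∀ r ∈ Ici a, 0 ≤ q r) (hya : 0 < y a) (hy'a : 0 < y' a) :
    ∀ r ∈ Ici a, 0 < y r ∧ 0 < y' r := by
  have hmono : MonotoneOn (fun r => y r * y' r) (Ici a) :=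
    monotoneOn_Ici_of_hasDerivWithinAt_nonneg (fun r hr => (hyd r hr).mul (hy'd r hr))
      fun r hr => by nlinarith [hq r (Ioi_subset_Ici_self hr), sq_nonneg (y r), sq_nonneg (y' r)]
  have hprod : ∀ r ∈ Ici a, 0 < y r * y' r := fun r hr =>
    (mul_pos hya hy'a).trans_le (hmono self_mem_Ici hr hr)
  have hy : ∀ r ∈ Ici a, 0 < y r := by
    intro r hr
    by_contra! hyr
    obtain ⟨s, hs, hys⟩ := isPreconnected_Ici.intermediate_value hr self_mem_Ici
      (fun x hx => (hyd x hx).continuousWithinAt) ⟨hyr, hya.le⟩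
    simpa [hys] using hprod s hs
  exact fun r hr => ⟨hy r hr, pos_of_mul_pos_right (hprod r hr) (hy r hr).le⟩

theorem abs_log_div_sub_mul_integral_le {δ0 lam a : ℝ} {K K' G y y' : ℝ → ℝ}
    (hδ0 : 0 < δ0) (hlam : 0 < lam)
    (hK : ∀ r ∈ Ici a, δ0 < K r ∧ K r < δ0⁻¹)
    (hKd : ∀ r ∈ Ici a, HasDerivWithinAt K (K' r) (Ici a) r)
    (hK'i : IntegrableOn K' (Ici a)) (hK'n : ∫ r in Ici a, |K' r| ≤ δ0⁻¹)
    (hGi : IntegrableOn G (Ici a)) (hGn : ∫ r in Ici a, |G r| ≤ δ0⁻¹ * lam)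
    (hy'a : y' a < δ0⁻¹ * lam * y a)
    (hyd : ∀ r ∈ Ici a, HasDerivWithinAt y (y' r) (Ici a) r)
    (hy'd : ∀ r ∈ Ici a, HasDerivWithinAt y' (lam ^ 2 * K r ^ 2 * y r - G r * y r) (Ici a) r)
    (hpos : ∀ r ∈ Ici a, 0 < y r ∧ 0 < y' r) {r : ℝ} (hr : a ≤ r) :
    |log (y r / y a) - lam * ∫ t in a..r, K t| ≤ 3 * δ0⁻¹ ^ 2 := by
  have hμ : 0 < lam * δ0 := mul_pos hlam hδ0
  have hriccati := abs_log_div_sub_integral_le (k := fun r => lam * K r)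
    (k' := fun r => lam * K' r) hμ (fun r hr => (hpos r hr).1) (fun r hr => (hpos r hr).2.le)
    (fun r hr => mul_le_mul_of_nonneg_left (hK r hr).1.le hlam.le) hyd
    (fun r hr => (hy'd r hr).congr_deriv (by ring)) (fun r hr => (hKd r hr).const_mul lam)
    hGi (hK'i.const_mul lam) hr
  rw [intervalIntegral.integral_const_mul] at hriccati
  refine hriccati.trans ?_
  have hya := (hpos a self_mem_Ici).1
  have hKa := hK a self_mem_Ici
  have hinit : |y' a / y a - lam * K a| ≤ lam * δ0⁻¹ := by
    have h1 : 0 < y' a / y a := div_pos (hpos a self_mem_Ici).2 hya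
    have h2 : y' a / y a < lam * δ0⁻¹ := by rw [div_lt_iff₀ hya]; linarith
    rw [abs_le]
    constructor <;> nlinarith [mul_lt_mul_of_pos_left hKa.1 hlam, mul_lt_mul_of_pos_left hKa.2 hlam]
  have hforce : ∫ t in Ici a, |G t + lam * K' t| ≤ 2 * (lam * δ0⁻¹) := by
    calc ∫ t in Ici a, |G t + lam * K' t| ≤ ∫ t in Ici a, (|G t| + lam * |K' t|) := by
          refine integral_mono (hGi.add (hK'i.const_mul lam)).abs
            (hGi.abs.add (hK'i.abs.const_mul lam)) fun t => ?_
          simpa [abs_mul, abs_of_pos hlam] using abs_add_le (G t) (lam * K' t)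
      _ = (∫ t in Ici a, |G t|) + lam * ∫ t in Ici a, |K' t| := by
          rw [integral_add hGi.abs (hK'i.abs.const_mul lam), integral_const_mul]
      _ ≤ 2 * (lam * δ0⁻¹) := by nlinarith
  rw [div_le_iff₀ hμ]
  calc _ ≤ lam * δ0⁻¹ + 2 * (lam * δ0⁻¹) := add_le_add hinit hforce
    _ = 3 * δ0⁻¹ ^ 2 * (lam * δ0) := by field_simp; ring

theorem mul_le_sq_sub_mul_and_sq_sub_mul_le {δ0 lam s g v L U e : ℝ} (hδ0 : 0 < δ0)
    (hlam : 0 < lam) (hs : lam * δ0 ≤ s ∧ s ≤ lam * δ0⁻¹)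
    (hρ : δ0 < 1 - g / s ^ 2 ∧ 1 - g / s ^ 2 < δ0⁻¹) (hLe : 0 ≤ L * e)
    (hv : L * e ≤ v ∧ v ≤ U * e) :
    δ0 ^ 2 * lam * L * (e * s) ≤ (s ^ 2 - g) * v ∧
      (s ^ 2 - g) * v ≤ δ0⁻¹ ^ 2 * lam * U * (e * s) := by
  set ρ := 1 - g / s ^ 2
  have hs0 : 0 < s := (mul_pos hlam hδ0).trans_le hs.1
  have hρ0 : 0 < ρ := hδ0.trans hρ.1
  have hsplit : (s ^ 2 - g) * v = s * (s * ρ * v) := by simp only [ρ]; field_simp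
  rw [hsplit]
  constructor
  · calc δ0 ^ 2 * lam * L * (e * s) = s * (lam * δ0 * δ0 * (L * e)) := by ring
      _ ≤ s * (s * ρ * v) := mul_le_mul_of_nonneg_left (mul_le_mul
          (mul_le_mul hs.1 hρ.1.le hδ0.le hs0.le) hv.1 hLe (mul_pos hs0 hρ0).le) hs0.le
  · calc s * (s * ρ * v) ≤ s * (lam * δ0⁻¹ * δ0⁻¹ * (U * e)) := mul_le_mul_of_nonneg_left
          (mul_le_mul (mul_le_mul hs.2 hρ.2.le hρ0.le (by positivity)) hv.2 (hLe.trans hv.1)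
            (by positivity)) hs0.le
      _ = δ0⁻¹ ^ 2 * lam * U * (e * s) := by ring

theorem add_mul_exp_integral_sub_one_le_deriv_and_le {δ0 lam a L U : ℝ} {K G y y' : ℝ → ℝ}
    (hδ0 : 0 < δ0) (hlam : 0 < lam) (hL : 0 ≤ L)
    (hK : ∀ r ∈ Ici a, δ0 < K r ∧ K r < δ0⁻¹) (hKc : ContinuousOn K (Ici a))
    (hq : ∀ r ∈ Ici a, δ0 < 1 - G r / (lam ^ 2 * K r ^ 2) ∧
      1 - G r / (lam ^ 2 * K r ^ 2) < δ0⁻¹)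
    (hy'd : ∀ r ∈ Ici a, HasDerivWithinAt y' (lam ^ 2 * K r ^ 2 * y r - G r * y r) (Ici a) r)
    (hy : ∀ r ∈ Ici a, L * exp (lam * ∫ t in a..r, K t) ≤ y r ∧
      y r ≤ U * exp (lam * ∫ t in a..r, K t))
    {r : ℝ} (hr : a ≤ r) :
    y' a + δ0 ^ 2 * lam * L * (exp (lam * ∫ t in a..r, K t) - 1) ≤ y' r ∧
      y' r ≤ y' a + δ0⁻¹ ^ 2 * lam * U * (exp (lam * ∫ t in a..r, K t) - 1) := by
  set E : ℝ → ℝ := fun r => exp (lam * ∫ t in a..r, K t)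
  have hE : ∀ x ∈ Ici a, HasDerivWithinAt E (E x * (lam * K x)) (Ici a) x := fun x hx =>
    ((hasDerivWithinAt_integral_Ici hKc hx).const_mul lam).exp
  have hEa : E a = 1 := by simp [E]
  have hy'' : ∀ x ∈ Ici a,
      δ0 ^ 2 * lam * L * (E x * (lam * K x)) ≤ lam ^ 2 * K x ^ 2 * y x - G x * y x ∧
      lam ^ 2 * K x ^ 2 * y x - G x * y x ≤ δ0⁻¹ ^ 2 * lam * U * (E x * (lam * K x)) := by
    intro x hx
    have hs : lam * δ0 ≤ lam * K x ∧ lam * K x ≤ lam * δ0⁻¹ :=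
      ⟨mul_le_mul_of_nonneg_left (hK x hx).1.le hlam.le,
        mul_le_mul_of_nonneg_left (hK x hx).2.le hlam.le⟩
    rw [← sub_mul, ← mul_pow]
    exact mul_le_sq_sub_mul_and_sq_sub_mul_le hδ0 hlam hs (by simpa [mul_pow] using hq x hx)
      (mul_nonneg hL (exp_pos _).le) (hy x hx)
  have hlow : y' a - δ0 ^ 2 * lam * L * E a ≤ y' r - δ0 ^ 2 * lam * L * E r :=
    monotoneOn_Ici_of_hasDerivWithinAt_nonneg
      (fun x hx => (hy'd x hx).sub ((hE x hx).const_mul (δ0 ^ 2 * lam * L)))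
      (fun x hx => sub_nonneg.2 (hy'' x (Ioi_subset_Ici_self hx)).1) self_mem_Ici hr hr
  have hup : δ0⁻¹ ^ 2 * lam * U * E a - y' a ≤ δ0⁻¹ ^ 2 * lam * U * E r - y' r :=
    monotoneOn_Ici_of_hasDerivWithinAt_nonneg
      (fun x hx => ((hE x hx).const_mul (δ0⁻¹ ^ 2 * lam * U)).sub (hy'd x hx))
      (fun x hx => sub_nonneg.2 (hy'' x (Ioi_subset_Ici_self hx)).2) self_mem_Ici hr hr
  rw [hEa] at hlow hup
  constructor <;> linarith

theorem ode_uniform_estimates_general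
    (lam0 δ0 ε : ℝ) (hδ0 : δ0 ∈ Ioo (0 : ℝ) 1) (hε : 0 < ε) :
    ∃ c C : ℝ, 0 < c ∧ c < C ∧
      ∀ lam : ℝ, lam ∈ Ioc (0 : ℝ) lam0 →
      ∀ K K' G y y' : ℝ → ℝ, ∀ y₀ y₁ : ℝ,
        -- hypotheses on `K`
        (∀ r ∈ Ici (ε / lam0), δ0 < K r ∧ K r < δ0⁻¹) →
        (∀ r ∈ Ici (ε / lam0), HasDerivWithinAt K (K' r) (Ici (ε / lam0)) r) →
        ContinuousOn K' (Ici (ε / lam0)) →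
        IntegrableOn K' (Ici (ε / lam0)) →
        (∫ r in Ici (ε / lam0), |K' r|) ≤ δ0⁻¹ →
        -- hypothesis on `G`
        IntegrableOn G (Ici (ε / lam)) →
        (∫ r in Ici (ε / lam), |G r|) ≤ δ0⁻¹ * lam →
        -- the ODE with its initial conditions
        0 < y₀ → y₁ ∈ Ioo (0 : ℝ) (δ0⁻¹ * lam * y₀) →
        y (ε / lam) = y₀ → y' (ε / lam) = y₁ →
        (∀ r ∈ Ici (ε / lam), HasDerivWithinAt y (y' r) (Ici (ε / lam)) r) →
        (∀ r ∈ Ici (ε / lam), HasDerivWithinAt y'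
          (lam ^ 2 * K r ^ 2 * y r - G r * y r) (Ici (ε / lam)) r) →
        -- (i): uniform two-sided bound for positive increasing solutions
        ((∀ r ∈ Ici (ε / lam), 0 < y r ∧ 0 < y' r) →
          ∀ r ∈ Ici (ε / lam),
            c * y₀ * Real.exp (lam * ∫ τ in Ioc (ε / lam) r, K τ) ≤ y r ∧
            y r ≤ C * y₀ * Real.exp (lam * ∫ τ in Ioc (ε / lam) r, K τ)) ∧
        -- (ii): positivity and derivative bounds under the extra assumption on `G/(λK)²`
        ((∀ r ∈ Ici (ε / lam), δ0 < 1 - G r / (lam ^ 2 * K r ^ 2) ∧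
            1 - G r / (lam ^ 2 * K r ^ 2) < δ0⁻¹) →
          (∀ r ∈ Ici (ε / lam), 0 < y r ∧ 0 < y' r) ∧
          (∀ r ∈ Ici (ε / lam),
            c * (y₁ + y₀ * lam * (Real.exp (lam * ∫ τ in Ioc (ε / lam) r, K τ) - 1))
              ≤ y' r ∧
            y' r ≤
              C * (y₁ + y₀ * lam *
                (Real.exp (lam * ∫ τ in Ioc (ε / lam) r, K τ) - 1)))) := by
  obtain ⟨hδ, hδ1⟩ := hδ0
  set M := 3 * δ0⁻¹ ^ 2
  have hc : δ0 ^ 2 * exp (-M) ≤ exp (-M) :=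
    mul_le_of_le_one_left (exp_pos _).le (pow_le_one₀ hδ.le hδ1.le)
  have hC : exp M ≤ δ0⁻¹ ^ 2 * exp M :=
    le_mul_of_one_le_left (exp_pos _).le (one_le_pow₀ (one_le_inv₀ hδ |>.2 hδ1.le))
  have hM : exp (-M) < exp M := exp_lt_exp.2 (neg_lt_self (by positivity))
  refine ⟨δ0 ^ 2 * exp (-M), δ0⁻¹ ^ 2 * exp M, by positivity, by linarith, ?_⟩
  intro lam hlam K K' G y y' y₀ y₁ hK hKd _ hK'i hK'n hGi hGn hy₀ hy₁ hya hy'a hyd hy'd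
  subst hya hy'a
  set a := ε / lam
  have ha : Ici a ⊆ Ici (ε / lam0) :=
    Ici_subset_Ici.2 (div_le_div_of_nonneg_left hε.le hlam.1 hlam.2)
  have hKa : ∀ r ∈ Ici a, δ0 < K r ∧ K r < δ0⁻¹ := fun r hr => hK r (ha hr)
  have hK'na : ∫ r in Ici a, |K' r| ≤ δ0⁻¹ := (setIntegral_mono_set hK'i.abs
    (ae_of_all _ fun _ => abs_nonneg _) ha.eventuallyLE).trans hK'n
  have hlog (hpos : ∀ r ∈ Ici a, 0 < y r ∧ 0 < y' r) (r : ℝ) (hr : r ∈ Ici a) :=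
    abs_log_div_sub_mul_integral_le hδ hlam.1 hKa (fun r hr => (hKd r (ha hr)).mono ha)
      (hK'i.mono_set ha) hK'na hGi hGn hy₁.2 hyd hy'd hpos hr
  refine ⟨fun hpos r hr => ?_, fun hq => ?_⟩
  · rw [← intervalIntegral.integral_of_le hr]
    exact mul_exp_le_and_le_mul_exp_of_abs_log_div_sub_le (hpos r hr).1 hy₀ hc hC (hlog hpos r hr)
  have hpos := pos_and_deriv_pos_of_hasDerivWithinAt hyd
    (fun r hr => (hy'd r hr).congr_deriv (sub_mul _ _ _).symm)
    (fun r hr => (sub_pos_of_pos_one_sub_div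
      (mul_pos (pow_pos hlam.1 2) (pow_pos (hδ.trans (hKa r hr).1) 2))
      (hδ.trans (hq r hr).1)).le) hy₀ hy₁.1
  refine ⟨hpos, fun r hr => ?_⟩
  have := add_mul_exp_integral_sub_one_le_deriv_and_le hδ hlam.1 (mul_pos (exp_pos _) hy₀).le hKa
    (fun x hx => (hKd x (ha hx)).continuousWithinAt.mono ha) hq hy'd
    (fun r hr => mul_exp_le_and_le_mul_exp_of_abs_log_div_sub_le (hpos r hr).1 hy₀ le_rfl le_rfl
      (hlog hpos r hr)) hr
  rw [← intervalIntegral.integral_of_le hr]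
  constructor
  · nlinarith [mul_le_mul_of_nonneg_right (hc.trans (exp_le_one_iff.2 (by simp [M]; positivity)))
      hy₁.1.le]
  · nlinarith [mul_le_mul_of_nonneg_right ((one_le_exp (by positivity)).trans hC) hy₁.1.le]

/-- Lemma 3.1 of Liu–Wang: uniform estimates for solutions of
`y″ − λ²K²(r)y + G(r)y = 0` on `[ε/λ, ∞)`, with constants independent of `λ ∈ (0, λ₀]`. -/
theorem ode_uniform_estimates
    (lam0 δ0 ε : ℝ) (hlam0 : 0 < lam0) (hδ0 : δ0 ∈ Ioo (0 : ℝ) 1) (hε : 0 < ε) :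
    ∃ c C : ℝ, 0 < c ∧ c < C ∧
      ∀ lam : ℝ, lam ∈ Ioc (0 : ℝ) lam0 →
      ∀ K K' G y y' : ℝ → ℝ, ∀ y₀ y₁ : ℝ,
        -- hypotheses on `K`
        (∀ r ∈ Ici (ε / lam0), δ0 < K r ∧ K r < δ0⁻¹) →
        (∀ r ∈ Ici (ε / lam0), HasDerivWithinAt K (K' r) (Ici (ε / lam0)) r) →
        ContinuousOn K' (Ici (ε / lam0)) →
        IntegrableOn K' (Ici (ε / lam0)) →
        (∫ r in Ici (ε / lam0), |K' r|) ≤ δ0⁻¹ →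
        -- hypothesis on `G`
        IntegrableOn G (Ici (ε / lam)) →
        (∫ r in Ici (ε / lam), |G r|) ≤ δ0⁻¹ * lam →
        -- the ODE with its initial conditions
        0 < y₀ → y₁ ∈ Ioo (0 : ℝ) (δ0⁻¹ * lam * y₀) →
        y (ε / lam) = y₀ → y' (ε / lam) = y₁ →
        (∀ r ∈ Ici (ε / lam), HasDerivWithinAt y (y' r) (Ici (ε / lam)) r) →
        (∀ r ∈ Ici (ε / lam), HasDerivWithinAt y'
          (lam ^ 2 * K r ^ 2 * y r - G r * y r) (Ici (ε / lam)) r) →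
        -- (i): uniform two-sided bound for positive increasing solutions
        ((∀ r ∈ Ici (ε / lam), 0 < y r ∧ 0 < y' r) →
          ∀ r ∈ Ici (ε / lam),
            c * y₀ * Real.exp (lam * ∫ τ in Ioc (ε / lam) r, K τ) ≤ y r ∧
            y r ≤ C * y₀ * Real.exp (lam * ∫ τ in Ioc (ε / lam) r, K τ)) ∧
        -- (ii): positivity and derivative bounds under the extra assumption on `G/(λK)²`
        ((∀ r ∈ Ici (ε / lam), δ0 < 1 - G r / (lam ^ 2 * K r ^ 2) ∧
            1 - G r / (lam ^ 2 * K r ^ 2) < δ0⁻¹) →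
          (∀ r ∈ Ici (ε / lam), 0 < y r ∧ 0 < y' r) ∧
          (∀ r ∈ Ici (ε / lam),
            c * (y₁ + y₀ * lam * (Real.exp (lam * ∫ τ in Ioc (ε / lam) r, K τ) - 1))
              ≤ y' r ∧
            y' r ≤
              C * (y₁ + y₀ * lam *
                (Real.exp (lam * ∫ τ in Ioc (ε / lam) r, K τ) - 1)))) :=
  ode_uniform_estimates_general lam0 δ0 ε hδ0 hε
end

section
/- Let β > 0, α, γ ∈ ℝ and R > 0. Then there exists a constant C, independent of t, such that for all t > 2: ∫₀^{t+R} (1+r)^α (ln(1+r))^γ e^{−β(t−r)} dr ≤ C (t+R)^α (ln(t+R))^γ. -/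
/-!
Write `T = t + R`. On `(0, 1]` the integral is `e^{-βt}` times a constant, and `e^{-βT}` is
dominated by `T^α (log T)^γ` since exponentials beat every power of `T` and of `log T`.
On `[1, T]` the weight varies slowly: `(1+r)^α (log (1+r))^γ ≤ C T^α (log T)^γ e^{β(T-r)/2}`,
because for `r ≥ T/2` the weight is comparable to its value at `T`, while for `r ≤ T/2` it is
polynomial in `T` and `e^{β(T-r)/2} ≥ e^{βT/4}`. The leftover factor `e^{-β(t-r)/2}` integrates
to `O(1)`. No integrability is needed anywhere: near `r = 0` the integrand need not be integrable,
but for a nonnegative integrand splitting the domain can only increase the Bochner integral,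
which is `0` when the integrand is not integrable.
-/

open MeasureTheory Set Real Filter

theorem rpow_mul_log_rpow_nonneg (a b : ℝ) {x : ℝ} (hx : 1 ≤ x) : 0 ≤ x ^ a * log x ^ b :=
  mul_nonneg (rpow_nonneg (by linarith) a) (rpow_nonneg (log_nonneg hx) b)

theorem rpow_le_two_rpow_abs_mul (a : ℝ) {x T : ℝ} (hT : 0 < T) (h₁ : T / 2 ≤ x)
    (h₂ : x ≤ 2 * T) : x ^ a ≤ 2 ^ |a| * T ^ a := by
  rcases le_or_gt 0 a with ha | ha
  · calc x ^ a ≤ (2 * T) ^ a := rpow_le_rpow (by linarith) h₂ ha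
      _ = 2 ^ |a| * T ^ a := by rw [mul_rpow zero_le_two hT.le, abs_of_nonneg ha]
  · calc x ^ a ≤ (T / 2) ^ a := rpow_le_rpow_of_nonpos (by positivity) h₁ ha.le
      _ = 2 ^ |a| * T ^ a := by
        rw [div_rpow hT.le zero_le_two, abs_of_neg ha, rpow_neg zero_le_two, div_eq_mul_inv,
          mul_comm]

theorem rpow_mul_log_rpow_le_two_rpow_abs_mul (a b : ℝ) {x T : ℝ} (hT : 2 ≤ T)
    (h₁ : 1 + T / 2 ≤ x) (h₂ : x ≤ 1 + T) :
    x ^ a * log x ^ b ≤ 2 ^ (|a| + |b|) * (T ^ a * log T ^ b) := by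
  have hlogT : 0 < log T := log_pos (by linarith)
  have hpow : x ^ a ≤ 2 ^ |a| * T ^ a :=
    rpow_le_two_rpow_abs_mul a (by linarith) (by linarith) (by linarith)
  have hlog : log x ^ b ≤ 2 ^ |b| * log T ^ b := by
    refine rpow_le_two_rpow_abs_mul b hlogT ?_ ?_
    · have : log T ≤ log (x ^ 2) := log_le_log (by linarith) (by nlinarith)
      rw [log_pow] at this
      push_cast at this
      linarith
    · have : log x ≤ log (T ^ 2) := log_le_log (by linarith) (by nlinarith)
      rwa [log_pow, Nat.cast_ofNat] at this
  calc x ^ a * log x ^ b ≤ (2 ^ |a| * T ^ a) * (2 ^ |b| * log T ^ b) :=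
        mul_le_mul hpow hlog (rpow_nonneg (log_nonneg (by linarith)) _) (by positivity)
    _ = 2 ^ (|a| + |b|) * (T ^ a * log T ^ b) := by rw [rpow_add two_pos]; ring

theorem rpow_mul_log_rpow_le (a b : ℝ) {x : ℝ} (hx : 2 ≤ x) :
    x ^ a * log x ^ b ≤ log 2 ^ (-|b|) * x ^ (|a| + |b|) := by
  have hlog2 : 0 < log 2 := log_pos one_lt_two
  have hA : 1 ≤ log 2 ^ (-|b|) := one_le_rpow_of_pos_of_le_one_of_nonpos hlog2
    (log_two_lt_d9.le.trans (by norm_num)) (neg_nonpos.2 (abs_nonneg b))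
  have hlog : log 2 ≤ log x := log_le_log two_pos hx
  have hxa : x ^ a ≤ x ^ |a| := rpow_le_rpow_of_exponent_le (by linarith) (le_abs_self a)
  have hlogb : log x ^ b ≤ log 2 ^ (-|b|) * x ^ |b| := by
    rcases le_or_gt 0 b with hb | hb
    · rw [abs_of_nonneg hb]
      calc log x ^ b ≤ x ^ b := rpow_le_rpow (hlog2.le.trans hlog)
            ((log_le_sub_one_of_pos (by linarith)).trans (by linarith)) hb
        _ ≤ log 2 ^ (-b) * x ^ b :=
            le_mul_of_one_le_left (by positivity) (by rwa [abs_of_nonneg hb] at hA)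
    · rw [abs_of_neg hb, neg_neg]
      calc log x ^ b ≤ log 2 ^ b := rpow_le_rpow_of_nonpos hlog2 hlog hb.le
        _ ≤ log 2 ^ b * x ^ (-b) :=
            le_mul_of_one_le_right (by positivity) (one_le_rpow (by linarith) (by linarith))
  calc x ^ a * log x ^ b ≤ x ^ |a| * (log 2 ^ (-|b|) * x ^ |b|) :=
        mul_le_mul hxa hlogb (rpow_nonneg (hlog2.le.trans hlog) _) (by positivity)
    _ = log 2 ^ (-|b|) * x ^ (|a| + |b|) := by rw [rpow_add (by linarith)]; ring

theorem inv_rpow_mul_log_rpow_le (a b : ℝ) {x : ℝ} (hx : 2 ≤ x) :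
    (x ^ a * log x ^ b)⁻¹ ≤ log 2 ^ (-|b|) * x ^ (|a| + |b|) := by
  have hlog : 0 < log x := log_pos (by linarith)
  simpa only [abs_neg, rpow_neg (by linarith : (0 : ℝ) ≤ x), rpow_neg hlog.le, mul_inv]
    using rpow_mul_log_rpow_le (-a) (-b) hx

theorem exists_rpow_le_mul_exp (k : ℝ) {ε : ℝ} (hε : 0 < ε) :
    ∃ C > 0, ∀ x, 1 ≤ x → x ^ k ≤ C * exp (ε * x) := by
  obtain ⟨n, hn⟩ := exists_nat_ge k
  refine ⟨n.factorial / ε ^ n, by positivity, fun x hx => ?_⟩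
  have hfac := pow_div_factorial_le_exp _ (mul_nonneg hε.le (zero_le_one.trans hx)) n
  rw [div_le_iff₀ (by positivity)] at hfac
  calc x ^ k ≤ x ^ (n : ℝ) := rpow_le_rpow_of_exponent_le hx hn
    _ = (ε * x) ^ n / ε ^ n := by rw [rpow_natCast, mul_pow]; field_simp
    _ ≤ exp (ε * x) * n.factorial / ε ^ n := by gcongr
    _ = n.factorial / ε ^ n * exp (ε * x) := by ring

theorem exists_exp_neg_le_rpow_mul_log_rpow (a b : ℝ) {ε : ℝ} (hε : 0 < ε) :
    ∃ C > 0, ∀ x, 2 ≤ x → exp (-(ε * x)) ≤ C * (x ^ a * log x ^ b) := by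
  obtain ⟨C, hC, hpow⟩ := exists_rpow_le_mul_exp (|a| + |b|) hε
  refine ⟨log 2 ^ (-|b|) * C, by positivity, fun x hx => ?_⟩
  have hlog : 0 < log x := log_pos (by linarith)
  have hW : 0 < x ^ a * log x ^ b := by positivity
  have hinv : (x ^ a * log x ^ b)⁻¹ ≤ log 2 ^ (-|b|) * C * exp (ε * x) := by
    rw [mul_assoc]
    exact (inv_rpow_mul_log_rpow_le a b hx).trans
      (mul_le_mul_of_nonneg_left (hpow x (by linarith)) (by positivity))
  rw [inv_le_iff_one_le_mul₀ hW] at hinv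
  rw [exp_neg, inv_le_iff_one_le_mul₀ (exp_pos _)]
  linarith

theorem exists_rpow_mul_log_rpow_le_mul_exp (a b : ℝ) {ε : ℝ} (hε : 0 < ε) :
    ∃ C > 0, ∀ T, 2 ≤ T → ∀ r ∈ Icc 1 T,
      (1 + r) ^ a * log (1 + r) ^ b ≤ C * (T ^ a * log T ^ b) * exp (ε * (T - r)) := by
  set A := log 2 ^ (-|b|)
  set K := |a| + |b|
  have hA : 0 < A := rpow_pos_of_pos (log_pos one_lt_two) _
  obtain ⟨C, hC, hpow⟩ := exists_rpow_le_mul_exp (K + K) (half_pos hε)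
  refine ⟨2 ^ K + A ^ 2 * C, by positivity, fun T hT r hr => ?_⟩
  have hW : 0 < T ^ a * log T ^ b := by
    have := log_pos (by linarith : 1 < T); positivity
  have hexp : 1 ≤ exp (ε * (T - r)) := one_le_exp (mul_nonneg hε.le (by linarith [hr.2]))
  rcases le_or_gt (T / 2) r with hr' | hr'
  · calc (1 + r) ^ a * log (1 + r) ^ b ≤ 2 ^ K * (T ^ a * log T ^ b) :=
          rpow_mul_log_rpow_le_two_rpow_abs_mul a b hT (by linarith) (by linarith [hr.2])
      _ ≤ (2 ^ K + A ^ 2 * C) * (T ^ a * log T ^ b) := by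
          gcongr; exact le_add_of_nonneg_right (by positivity)
      _ ≤ (2 ^ K + A ^ 2 * C) * (T ^ a * log T ^ b) * exp (ε * (T - r)) :=
          le_mul_of_one_le_right (by positivity) hexp
  · have hsmall : (1 + r) ^ a * log (1 + r) ^ b ≤ A * T ^ K :=
      (rpow_mul_log_rpow_le a b (by linarith [hr.1])).trans
        (by gcongr <;> linarith [hr.1])
    have hlarge : 1 ≤ A * T ^ K * (T ^ a * log T ^ b) := by
      have := inv_rpow_mul_log_rpow_le a b hT
      rw [inv_le_iff_one_le_mul₀ hW] at this
      linear_combination this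
    have hdecay : T ^ K * T ^ K ≤ C * exp (ε * (T - r)) := by
      rw [← rpow_add (by linarith)]
      exact (hpow T (by linarith)).trans
        (mul_le_mul_of_nonneg_left (exp_le_exp.2 (by nlinarith)) hC.le)
    calc (1 + r) ^ a * log (1 + r) ^ b ≤ A * T ^ K * (A * T ^ K * (T ^ a * log T ^ b)) :=
          le_mul_of_one_le_right (by positivity) hlarge |>.trans' hsmall
      _ = A ^ 2 * (T ^ K * T ^ K) * (T ^ a * log T ^ b) := by ring
      _ ≤ A ^ 2 * (C * exp (ε * (T - r))) * (T ^ a * log T ^ b) := by gcongr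
      _ = A ^ 2 * C * (T ^ a * log T ^ b) * exp (ε * (T - r)) := by ring
      _ ≤ (2 ^ K + A ^ 2 * C) * (T ^ a * log T ^ b) * exp (ε * (T - r)) := by
          gcongr; exact le_add_of_nonneg_left (by positivity)

theorem setIntegral_union_le_add_of_nonneg {X : Type*} [MeasurableSpace X] {μ : Measure X}
    {f : X → ℝ} {s t : Set X} (hs : MeasurableSet s) (ht : MeasurableSet t)
    (hf : ∀ x ∈ s ∪ t, 0 ≤ f x) :
    ∫ x in s ∪ t, f x ∂μ ≤ (∫ x in s, f x ∂μ) + ∫ x in t, f x ∂μ := by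
  have hs₀ : 0 ≤ᵐ[μ.restrict s] f :=
    (ae_restrict_iff' hs).2 (ae_of_all _ fun x hx => hf x (Or.inl hx))
  have ht₀ : 0 ≤ᵐ[μ.restrict t] f :=
    (ae_restrict_iff' ht).2 (ae_of_all _ fun x hx => hf x (Or.inr hx))
  by_cases hfi : IntegrableOn f s μ ∧ IntegrableOn f t μ
  · rw [← integral_add_measure hfi.1 hfi.2]
    exact integral_mono_measure (Measure.restrict_union_le s t)
      (ae_add_measure_iff.2 ⟨hs₀, ht₀⟩) (Integrable.add_measure hfi.1 hfi.2)
  · rw [integral_undef fun h : IntegrableOn f (s ∪ t) μ =>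
      hfi ⟨h.mono_set subset_union_left, h.mono_set subset_union_right⟩]
    exact add_nonneg (integral_nonneg_of_ae hs₀) (integral_nonneg_of_ae ht₀)

theorem setIntegral_Ioc_exp_mul_sub_le {c : ℝ} (hc : 0 < c) (a b : ℝ) :
    ∫ r in Ioc a b, exp (c * (r - b)) ≤ c⁻¹ := by
  have hsplit : (fun r => exp (c * (r - b))) = fun r => exp (c * r) * exp (-(c * b)) := by
    ext r; rw [← exp_add]; ring_nf
  calc ∫ r in Ioc a b, exp (c * (r - b))
      ≤ ∫ r in Iic b, exp (c * (r - b)) := by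
        refine setIntegral_mono_set ?_ (ae_of_all _ fun r => (exp_pos _).le)
          Ioc_subset_Iic_self.eventuallyLE
        rw [hsplit]; exact (integrableOn_exp_mul_Iic hc b).mul_const _
    _ = c⁻¹ := by
        rw [hsplit, integral_mul_const, integral_exp_mul_Iic hc, div_mul_eq_mul_div,
          ← exp_add, add_neg_cancel, exp_zero, one_div]

theorem integral_mul_exp_neg_mul_sub (μ : Measure ℝ) (f : ℝ → ℝ) (β t : ℝ) :
    ∫ r, f r * exp (-β * (t - r)) ∂μ = exp (-β * t) * ∫ r, f r * exp (β * r) ∂μ := by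
  rw [← integral_const_mul]
  congr with r
  rw [show -β * (t - r) = -β * t + β * r by ring, exp_add]
  ring

theorem setIntegral_mul_exp_neg_mul_sub_le {f : ℝ → ℝ} {a b M β : ℝ} (hβ : 0 < β) (hM : 0 ≤ M)
    (hf₀ : ∀ r ∈ Ioc a b, 0 ≤ f r) (hf : ∀ r ∈ Ioc a b, f r ≤ M * exp (β / 2 * (b - r)))
    (s : ℝ) :
    ∫ r in Ioc a b, f r * exp (-β * (s - r)) ≤ 2 / β * M * exp (β * (b - s)) := by
  have hmajor : ∀ r ∈ Ioc a b,
      f r * exp (-β * (s - r)) ≤ M * exp (β * (b - s)) * exp (β / 2 * (r - b)) := by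
    intro r hr
    calc f r * exp (-β * (s - r)) ≤ M * exp (β / 2 * (b - r)) * exp (-β * (s - r)) :=
          mul_le_mul_of_nonneg_right (hf r hr) (exp_pos _).le
      _ = M * exp (β * (b - s)) * exp (β / 2 * (r - b)) := by
          rw [mul_assoc, mul_assoc, ← exp_add, ← exp_add]; ring_nf
  calc ∫ r in Ioc a b, f r * exp (-β * (s - r))
      ≤ ∫ r in Ioc a b, M * exp (β * (b - s)) * exp (β / 2 * (r - b)) := by
        refine integral_mono_of_nonneg ?_ ?_ ?_
        · exact (ae_restrict_iff' measurableSet_Ioc).2 (ae_of_all _ fun r hr =>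
            mul_nonneg (hf₀ r hr) (exp_pos _).le)
        · exact (Continuous.integrableOn_Ioc (by fun_prop))
        · exact (ae_restrict_iff' measurableSet_Ioc).2 (ae_of_all _ hmajor)
    _ = M * exp (β * (b - s)) * ∫ r in Ioc a b, exp (β / 2 * (r - b)) := integral_const_mul _ _
    _ ≤ M * exp (β * (b - s)) * (β / 2)⁻¹ := by
        gcongr
        exact setIntegral_Ioc_exp_mul_sub_le (half_pos hβ) a b
    _ = 2 / β * M * exp (β * (b - s)) := by field_simp

/-- Lemma 4.2: `∫₀^{t+R} (1+r)^α ln^γ(1+r) e^{−β(t−r)} dr ≲ (t+R)^α ln^γ(t+R)`,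
uniformly for `t > 2`. -/
theorem integral_weighted_exp_bound
    (β α γ R : ℝ) (hβ : 0 < β) (hR : 0 < R) :
    ∃ C > (0 : ℝ), ∀ t : ℝ, 2 < t →
      (∫ r in Ioc (0 : ℝ) (t + R),
          (1 + r) ^ α * Real.log (1 + r) ^ γ * Real.exp (-β * (t - r)))
        ≤ C * (t + R) ^ α * Real.log (t + R) ^ γ := by
  obtain ⟨C₁, hC₁, hdecay⟩ := exists_exp_neg_le_rpow_mul_log_rpow α γ hβ
  obtain ⟨C₂, hC₂, hweight⟩ := exists_rpow_mul_log_rpow_le_mul_exp α γ (half_pos hβ)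
  set J := ∫ r in Ioc (0 : ℝ) 1, (1 + r) ^ α * log (1 + r) ^ γ * exp (β * r)
  have hJ : 0 ≤ J := setIntegral_nonneg measurableSet_Ioc fun r hr =>
    mul_nonneg (rpow_mul_log_rpow_nonneg α γ (by linarith [hr.1])) (exp_pos _).le
  refine ⟨J * exp (β * R) * C₁ + 2 / β * exp (β * R) * C₂, by positivity, fun t ht => ?_⟩
  have hT : 2 ≤ t + R := by linarith
  have hW : 0 ≤ (t + R) ^ α * log (t + R) ^ γ := rpow_mul_log_rpow_nonneg α γ (by linarith)
  have hnear : exp (-β * t) * J ≤ J * exp (β * R) * C₁ * ((t + R) ^ α * log (t + R) ^ γ) := by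
    calc exp (-β * t) * J = exp (β * R) * exp (-(β * (t + R))) * J := by
          rw [← exp_add]; ring_nf
      _ ≤ exp (β * R) * (C₁ * ((t + R) ^ α * log (t + R) ^ γ)) * J := by
          gcongr; exact hdecay _ hT
      _ = J * exp (β * R) * C₁ * ((t + R) ^ α * log (t + R) ^ γ) := by ring
  have hfar := setIntegral_mul_exp_neg_mul_sub_le hβ (mul_nonneg hC₂.le hW)
    (fun r hr => rpow_mul_log_rpow_nonneg α γ (by linarith [hr.1]))
    (fun r hr => hweight (t + R) hT r ⟨hr.1.le, hr.2⟩) t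
  rw [add_sub_cancel_left] at hfar
  rw [← Ioc_union_Ioc_eq_Ioc zero_le_one (by linarith : (1 : ℝ) ≤ t + R)]
  calc _ ≤ (∫ r in Ioc (0 : ℝ) 1, (1 + r) ^ α * log (1 + r) ^ γ * exp (-β * (t - r)))
        + ∫ r in Ioc 1 (t + R), (1 + r) ^ α * log (1 + r) ^ γ * exp (-β * (t - r)) :=
        setIntegral_union_le_add_of_nonneg measurableSet_Ioc measurableSet_Ioc fun r hr =>
          mul_nonneg (rpow_mul_log_rpow_nonneg α γ (by rcases hr with h | h <;> linarith [h.1]))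
            (exp_pos _).le
    _ ≤ J * exp (β * R) * C₁ * ((t + R) ^ α * log (t + R) ^ γ)
        + 2 / β * (C₂ * ((t + R) ^ α * log (t + R) ^ γ)) * exp (β * R) :=
        add_le_add (by rwa [integral_mul_exp_neg_mul_sub]) hfar
    _ = _ := by ring
end

section
/- Let n ≥ 2, R > 0, c₁ ∈ (0,1), q > 0, and for each λ ∈ (0,1] let φ_λ : ℝⁿ → ℝ satisfy c₁⟨λ|x|⟩^{−(n−1)/2} e^{λ|x|} < φ_λ(x) < c₁^{−1}⟨λ|x|⟩^{−(n−1)/2} e^{λ|x|} for all x, with (λ, x) ↦ φ_λ(x) measurable, where ⟨s⟩ = √(1+s²). Define b_q(t,x) = ∫₀¹ e^{−λt} φ_λ(x) λ^{q−1} dλ. Then there exists a constant c > 0, depending only on n, q, R, c₁, such that b_q(t,x) ≥ c (t+R)^{−q} for all t ≥ 0 and all x with |x| ≤ t + R. -/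
/-!
For `λ ≤ min 1 R / (t + R)` both `λ t` and `λ |x|` are at most `1` on the light cone, so
`e^{-λt} φ_λ(x) ≥ c₁ 2^{-(n-1)/4} e^{-1}` there, and integrating `λ^{q-1}` over this range already
gives `≳ (min 1 R)^q (t + R)^{-q}`. The integrand is nonnegative and bounded by
`c₁⁻¹ e^{|x|} λ^{q-1}`, so it is integrable and the rest of `(0, 1]` only adds to the integral.
-/

open MeasureTheory Set Real Filter

noncomputable section

abbrev Eucl (n : ℕ) := EuclideanSpace ℝ (Fin n)

theorem integrableOn_Ioc_of_norm_le_mul_rpow {f : ℝ → ℝ} {C q b : ℝ} (hq : 0 < q)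
    (hf : AEStronglyMeasurable f (volume.restrict (Ioc 0 b)))
    (hfC : ∀ x ∈ Ioc 0 b, ‖f x‖ ≤ C * x ^ (q - 1)) :
    IntegrableOn f (Ioc 0 b) :=
  ((intervalIntegral.intervalIntegrable_rpow' (by linarith : (-1 : ℝ) < q - 1)).1.const_mul
    C).mono' hf ((ae_restrict_mem measurableSet_Ioc).mono hfC)

theorem mul_rpow_div_le_setIntegral_Ioc {f : ℝ → ℝ} {K q m b : ℝ} (hq : 0 < q) (hm : 0 ≤ m)
    (hmb : m ≤ b) (hf : IntegrableOn f (Ioc 0 b)) (hf0 : ∀ x ∈ Ioc 0 b, 0 ≤ f x)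
    (hfK : ∀ x ∈ Ioc 0 m, K * x ^ (q - 1) ≤ f x) :
    K * (m ^ q / q) ≤ ∫ x in Ioc 0 b, f x := by
  have hsub : Ioc 0 m ⊆ Ioc 0 b := Ioc_subset_Ioc_right hmb
  have hK : IntegrableOn (fun x : ℝ => K * x ^ (q - 1)) (Ioc 0 m) :=
    (intervalIntegral.intervalIntegrable_rpow' (by linarith : (-1 : ℝ) < q - 1)).1.const_mul K
  calc K * (m ^ q / q) = ∫ x in Ioc 0 m, K * x ^ (q - 1) := by
        rw [integral_const_mul, ← intervalIntegral.integral_of_le hm,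
          integral_rpow (Or.inl (by linarith)), sub_add_cancel, zero_rpow hq.ne', sub_zero]
    _ ≤ ∫ x in Ioc 0 m, f x := setIntegral_mono_on hK (hf.mono_set hsub) measurableSet_Ioc hfK
    _ ≤ ∫ x in Ioc 0 b, f x :=
        setIntegral_mono_set hf ((ae_restrict_mem measurableSet_Ioc).mono hf0) hsub.eventuallyLE

theorem sqrt_one_add_sq_rpow_neg_le_one {α : ℝ} (hα : 0 ≤ α) (s : ℝ) :
    sqrt (1 + s ^ 2) ^ (-α) ≤ 1 :=
  rpow_le_one_of_one_le_of_nonpos (one_le_sqrt.2 (by nlinarith)) (by linarith)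

theorem sqrt_two_rpow_neg_le {α s : ℝ} (hα : 0 ≤ α) (hs : |s| ≤ 1) :
    sqrt 2 ^ (-α) ≤ sqrt (1 + s ^ 2) ^ (-α) := by
  have hs2 : s ^ 2 ≤ 1 := by nlinarith [sq_abs s, abs_nonneg s]
  exact rpow_le_rpow_of_nonpos (sqrt_pos.2 (by positivity)) (sqrt_le_sqrt (by linarith))
    (by linarith)

section Profile

variable {E : Type*} [NormedAddCommGroup E] {φ : ℝ → E → ℝ} {α c₁ : ℝ}

def IsProfileBounded (φ : ℝ → E → ℝ) (α c₁ : ℝ) : Prop :=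
  ∀ lam ∈ Ioc (0 : ℝ) 1, ∀ x : E,
    c₁ * sqrt (1 + (lam * ‖x‖) ^ 2) ^ (-α) * exp (lam * ‖x‖) < φ lam x ∧
    φ lam x < c₁⁻¹ * sqrt (1 + (lam * ‖x‖) ^ 2) ^ (-α) * exp (lam * ‖x‖)

namespace IsProfileBounded

variable (hφ : IsProfileBounded φ α c₁) (hc₁ : 0 < c₁)
include hφ hc₁

theorem pos {lam : ℝ} (hlam : lam ∈ Ioc (0 : ℝ) 1) (x : E) : 0 < φ lam x :=
  lt_trans (by positivity) (hφ lam hlam x).1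

theorem le_exp_norm (hα : 0 ≤ α) {lam : ℝ} (hlam : lam ∈ Ioc (0 : ℝ) 1) (x : E) :
    φ lam x ≤ c₁⁻¹ * exp ‖x‖ := by
  have hexp : exp (lam * ‖x‖) ≤ exp ‖x‖ :=
    exp_le_exp.2 (mul_le_of_le_one_left (norm_nonneg x) hlam.2)
  calc φ lam x ≤ c₁⁻¹ * sqrt (1 + (lam * ‖x‖) ^ 2) ^ (-α) * exp (lam * ‖x‖) :=
        (hφ lam hlam x).2.le
    _ ≤ c₁⁻¹ * 1 * exp ‖x‖ := by
        gcongr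
        exact sqrt_one_add_sq_rpow_neg_le_one hα _
    _ = c₁⁻¹ * exp ‖x‖ := by rw [mul_one]

theorem le_exp_neg_mul_mul_of_mul_le_one (hα : 0 ≤ α) {lam t T : ℝ}
    (hlam : lam ∈ Ioc (0 : ℝ) 1)
    {x : E} (hxT : ‖x‖ ≤ T) (htT : t ≤ T) (hlamT : lam * T ≤ 1) :
    c₁ * sqrt 2 ^ (-α) * exp (-1) ≤ exp (-lam * t) * φ lam x := by
  have hlx : 0 ≤ lam * ‖x‖ := mul_nonneg hlam.1.le (norm_nonneg x)
  have hlx1 : lam * ‖x‖ ≤ 1 := (mul_le_mul_of_nonneg_left hxT hlam.1.le).trans hlamT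
  have hlt : lam * t ≤ 1 := (mul_le_mul_of_nonneg_left htT hlam.1.le).trans hlamT
  have hw : sqrt 2 ^ (-α) ≤ sqrt (1 + (lam * ‖x‖) ^ 2) ^ (-α) * exp (lam * ‖x‖) :=
    (sqrt_two_rpow_neg_le hα (abs_le.2 ⟨by linarith, hlx1⟩)).trans
      (le_mul_of_one_le_right (by positivity) (one_le_exp hlx))
  calc c₁ * sqrt 2 ^ (-α) * exp (-1)
      ≤ c₁ * (sqrt (1 + (lam * ‖x‖) ^ 2) ^ (-α) * exp (lam * ‖x‖)) * exp (-lam * t) :=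
        mul_le_mul (mul_le_mul_of_nonneg_left hw hc₁.le) (exp_le_exp.2 (by linarith))
          (exp_pos _).le (by positivity)
    _ ≤ φ lam x * exp (-lam * t) := by
        rw [← mul_assoc]
        exact mul_le_mul_of_nonneg_right (hφ lam hlam x).1.le (exp_pos _).le
    _ = exp (-lam * t) * φ lam x := mul_comm _ _

theorem integrableOn_exp_neg_mul_mul_rpow [MeasurableSpace E] (hα : 0 ≤ α)
    (hmeas : Measurable fun p : ℝ × E => φ p.1 p.2) {q t : ℝ} (hq : 0 < q) (ht : 0 ≤ t)
    (x : E) :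
    IntegrableOn (fun lam => exp (-lam * t) * φ lam x * lam ^ (q - 1)) (Ioc 0 1) := by
  refine integrableOn_Ioc_of_norm_le_mul_rpow (C := c₁⁻¹ * exp ‖x‖) hq ?_ fun lam hlam => ?_
  · have : Measurable fun lam => φ lam x := hmeas.comp (measurable_id.prodMk measurable_const)
    exact (by fun_prop : Measurable fun lam : ℝ => exp (-lam * t) * φ lam x * lam ^ (q - 1))
      |>.aestronglyMeasurable
  · have hexp : exp (-lam * t) ≤ 1 := exp_le_one_iff.2 (by nlinarith [hlam.1])
    rw [norm_of_nonneg (by have := hφ.pos hc₁ hlam x; have := hlam.1; positivity)]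
    refine mul_le_mul_of_nonneg_right ?_ (rpow_nonneg hlam.1.le _)
    calc exp (-lam * t) * φ lam x ≤ 1 * (c₁⁻¹ * exp ‖x‖) :=
          mul_le_mul hexp (hφ.le_exp_norm hc₁ hα hlam x) (hφ.pos hc₁ hlam x).le zero_le_one
      _ = c₁⁻¹ * exp ‖x‖ := one_mul _

end IsProfileBounded

end Profile

/-- Lower bound for the test function `b_q(t,x) = ∫₀¹ e^{−λt} φ_λ(x) λ^{q−1} dλ`:
`b_q(t,x) ≳ (t+R)^{−q}` on the light cone `|x| ≤ t + R`, with a constant depending only on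
`n`, `q`, `R`, `c₁`. -/
theorem bq_lower_bound
    (n : ℕ) (hn : 2 ≤ n) (R c₁ q : ℝ) (hR : 0 < R) (hc₁ : c₁ ∈ Ioo (0 : ℝ) 1) (hq : 0 < q) :
    ∃ c > (0 : ℝ), ∀ φ : ℝ → Eucl n → ℝ,
      Measurable (fun p : ℝ × Eucl n => φ p.1 p.2) →
      (∀ lam : ℝ, lam ∈ Ioc (0 : ℝ) 1 → ∀ x : Eucl n,
        c₁ * Real.sqrt (1 + (lam * ‖x‖) ^ 2) ^ (-(((n : ℝ) - 1) / 2)) *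
            Real.exp (lam * ‖x‖) < φ lam x ∧
        φ lam x < c₁⁻¹ * Real.sqrt (1 + (lam * ‖x‖) ^ 2) ^ (-(((n : ℝ) - 1) / 2)) *
            Real.exp (lam * ‖x‖)) →
      ∀ t : ℝ, 0 ≤ t → ∀ x : Eucl n, ‖x‖ ≤ t + R →
        c * (t + R) ^ (-q) ≤
          ∫ lam in Ioc (0 : ℝ) 1, Real.exp (-lam * t) * φ lam x * lam ^ (q - 1) := by
  have hα : 0 ≤ ((n : ℝ) - 1) / 2 := by
    have : (2 : ℝ) ≤ n := by exact_mod_cast hn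
    linarith
  set K := c₁ * sqrt 2 ^ (-(((n : ℝ) - 1) / 2)) * exp (-1)
  have hc₁0 := hc₁.1
  refine ⟨K * min 1 R ^ q / q, by positivity, fun φ hmeas hbound t ht x hx => ?_⟩
  have hφ : IsProfileBounded φ _ c₁ := hbound
  have hT : 0 < t + R := by linarith
  set m := min 1 R / (t + R)
  have hmT : m * (t + R) ≤ 1 := by rw [div_mul_cancel₀ _ hT.ne']; exact min_le_left _ _
  have hm1 : m ≤ 1 := div_le_one_of_le₀ ((min_le_right _ _).trans (by linarith)) hT.le
  calc K * min 1 R ^ q / q * (t + R) ^ (-q) = K * (m ^ q / q) := by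
        rw [div_rpow (by positivity) hT.le, rpow_neg hT.le]; ring
    _ ≤ _ := by
        refine mul_rpow_div_le_setIntegral_Ioc hq (by positivity) hm1
          (hφ.integrableOn_exp_neg_mul_mul_rpow hc₁0 hα hmeas hq ht x)
          (fun lam hlam => by have := hφ.pos hc₁0 hlam x; have := hlam.1; positivity)
          fun lam hlam => ?_
        have hlam1 : lam ∈ Ioc (0 : ℝ) 1 := ⟨hlam.1, hlam.2.trans hm1⟩
        exact mul_le_mul_of_nonneg_right
          (hφ.le_exp_neg_mul_mul_of_mul_le_one hc₁0 hα hlam1 hx (le_add_of_nonneg_right hR.le)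
            ((mul_le_mul_of_nonneg_right hlam.2 hT.le).trans hmT)) (rpow_nonneg hlam.1.le _)
end
end

section
/- Let n ≥ 2, R > 0, c₁ ∈ (0,1), and for each λ ∈ (0,1] let φ_λ : ℝⁿ → ℝ satisfy c₁⟨λ|x|⟩^{−(n−1)/2} e^{λ|x|} < φ_λ(x) < c₁^{−1}⟨λ|x|⟩^{−(n−1)/2} e^{λ|x|} for all x, with (λ, x) ↦ φ_λ(x) measurable, where ⟨s⟩ = √(1+s²). Define b_q(t,x) = ∫₀¹ e^{−λt} φ_λ(x) λ^{q−1} dλ. Then there exists a constant C > 0, depending only on n, q, R, c₁, such that for all t ≥ 0 and all x with |x| ≤ t + R: b_q(t,x) ≤ C (t+R)^{−q} if 0 < q < (n−1)/2, and b_q(t,x) ≤ C (t+R)^{−(n−1)/2} (t+R+1−|x|)^{(n−1)/2−q} if q > (n−1)/2. -/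
/-!
Write `s = |x|`, `τ = t + R`, `d = τ + 1 - s ≥ 1`, `m = (n - 1) / 2` and `⟨u⟩ = √(1 + u²)`.
For `λ ≤ 1` we have `e^{-λt} e^{λs} ≤ e^{R+1} e^{-λd}`, so the integrand of `b_q` is at most a
constant times `λ^{q-1} ⟨λs⟩^{-m} e^{-λd}`. If `s ≥ τ/2` then `⟨λτ⟩ ≤ 2⟨λs⟩`; if `s < τ/2` then
`d > τ/2` and half of the exponential absorbs any power of `⟨λτ⟩`. Either way the integrand is
`≲ λ^{q-1} ⟨λτ⟩^{-m} e^{-λd/2}`.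

For `q < m` drop the exponential and integrate over `(0, ∞)`: the substitution `u = τλ` gives
`τ^{-q} ∫₀^∞ u^{q-1} ⟨u⟩^{-m} du`, which converges. For `q > m` use `⟨λτ⟩ ≥ λτ`; the Gamma integral
then gives `Γ(q - m) τ^{-m} (d/2)^{m-q}`.
-/

open MeasureTheory Set Real Filter

noncomputable section

theorem Real.rpow_neg_le_mul_rpow_neg {x y a m : ℝ} (hm : 0 ≤ m) (ha : 0 < a) (hy : 0 < y)
    (hyx : y ≤ a * x) : x ^ (-m) ≤ a ^ m * y ^ (-m) := by
  have hx : 0 < x := pos_of_mul_pos_right (hy.trans_le hyx) ha.le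
  calc x ^ (-m) = a ^ m * (a * x) ^ (-m) := by
        rw [mul_rpow ha.le hx.le, ← mul_assoc, ← rpow_add ha, add_neg_cancel, rpow_zero, one_mul]
    _ ≤ a ^ m * y ^ (-m) :=
      mul_le_mul_of_nonneg_left (rpow_le_rpow_of_nonpos hy hyx (neg_nonpos.2 hm)) (by positivity)

theorem Real.le_sqrt_one_add_sq (u : ℝ) : u ≤ √(1 + u ^ 2) :=
  le_sqrt_of_sq_le (by linarith)

theorem Real.sqrt_one_add_sq_le_one_add {u : ℝ} (hu : 0 ≤ u) : √(1 + u ^ 2) ≤ 1 + u :=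
  sqrt_le_iff.2 ⟨by positivity, by nlinarith⟩

theorem exists_exp_neg_mul_le_mul_sqrt_one_add_sq_rpow_neg {m a : ℝ} (hm : 0 ≤ m) (ha : 0 < a) :
    ∃ c > 0, ∀ u, 0 ≤ u → exp (-(a * u)) ≤ c * √(1 + u ^ 2) ^ (-m) := by
  set M := max 1 (m / a)
  have hM : 0 < M := lt_max_of_lt_left one_pos
  refine ⟨M ^ m, by positivity, fun u hu => ?_⟩
  have hbracket : √(1 + u ^ 2) ≤ M * exp (u / M) := calc
    √(1 + u ^ 2) ≤ 1 + u := sqrt_one_add_sq_le_one_add hu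
    _ ≤ M * (u / M + 1) := by
      rw [mul_add, mul_div_cancel₀ _ hM.ne', mul_one, add_comm]
      gcongr; exact le_max_left _ _
    _ ≤ M * exp (u / M) := by gcongr; exact add_one_le_exp _
  have hrate : m / M * u ≤ a * u := by
    gcongr
    rw [div_le_iff₀ hM, mul_comm]
    exact (div_le_iff₀ ha).1 (le_max_right _ _)
  have hpow : √(1 + u ^ 2) ^ m ≤ M ^ m * exp (a * u) := calc
    √(1 + u ^ 2) ^ m ≤ (M * exp (u / M)) ^ m := by gcongr
    _ = M ^ m * exp (m / M * u) := by
      rw [mul_rpow hM.le (exp_pos _).le, ← exp_mul]; ring_nf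
    _ ≤ M ^ m * exp (a * u) := by gcongr
  rw [exp_neg, rpow_neg (sqrt_nonneg _), ← div_eq_mul_inv, le_div_iff₀ (by positivity),
    inv_mul_eq_div, div_le_iff₀ (exp_pos _)]
  exact hpow

theorem setIntegral_le_setIntegral_of_subset {α : Type*} [MeasurableSpace α] {μ : Measure α}
    {s t : Set α} {f g : α → ℝ} (hs : MeasurableSet s) (ht : MeasurableSet t) (hst : s ⊆ t)
    (hf : ∀ x ∈ s, 0 ≤ f x ∧ f x ≤ g x) (hg : ∀ x ∈ t, 0 ≤ g x) (hgi : IntegrableOn g t μ) :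
    ∫ x in s, f x ∂μ ≤ ∫ x in t, g x ∂μ :=
  (integral_mono_of_nonneg (ae_restrict_of_forall_mem hs fun x hx => (hf x hx).1)
      (hgi.mono_set hst) (ae_restrict_of_forall_mem hs fun x hx => (hf x hx).2)).trans
    (setIntegral_mono_set hgi (ae_restrict_of_forall_mem ht hg) hst.eventuallyLE)

theorem Real.rpow_sub_one_eq_rpow_one_sub_mul {a x : ℝ} (ha : 0 < a) (hx : 0 ≤ x) (p : ℝ) :
    x ^ (p - 1) = a ^ (1 - p) * (a * x) ^ (p - 1) := by
  rw [mul_rpow ha.le hx, ← mul_assoc, ← rpow_add ha, sub_add_sub_cancel, sub_self, rpow_zero,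
    one_mul]

theorem integral_Ioi_rpow_sub_one_mul_comp_mul_left (g : ℝ → ℝ) (p : ℝ) {a : ℝ} (ha : 0 < a) :
    ∫ x in Ioi 0, x ^ (p - 1) * g (a * x) = a ^ (-p) * ∫ x in Ioi 0, x ^ (p - 1) * g x := by
  rw [setIntegral_congr_fun measurableSet_Ioi fun x (hx : 0 < x) => by
      rw [rpow_sub_one_eq_rpow_one_sub_mul ha hx.le, mul_assoc],
    integral_const_mul, integral_comp_mul_left_Ioi (fun x => x ^ (p - 1) * g x) 0 ha, mul_zero,
    smul_eq_mul, ← mul_assoc, ← rpow_neg_one, ← rpow_add ha]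
  ring_nf

theorem IntegrableOn.rpow_sub_one_mul_comp_mul_left {g : ℝ → ℝ} {p a : ℝ} (ha : 0 < a)
    (hg : IntegrableOn (fun x => x ^ (p - 1) * g x) (Ioi 0)) :
    IntegrableOn (fun x => x ^ (p - 1) * g (a * x)) (Ioi 0) := by
  rw [← mul_zero a, ← integrableOn_Ioi_comp_mul_left_iff _ _ ha] at hg
  refine IntegrableOn.congr_fun (hg.const_mul (a ^ (1 - p))) (fun x (hx : 0 < x) => ?_)
    measurableSet_Ioi
  rw [rpow_sub_one_eq_rpow_one_sub_mul ha hx.le, mul_assoc]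

theorem integrableOn_Ioi_rpow_mul_sqrt_one_add_sq_rpow_neg {q m : ℝ} (hq : 0 < q) (hqm : q < m) :
    IntegrableOn (fun u => u ^ (q - 1) * √(1 + u ^ 2) ^ (-m)) (Ioi 0) := by
  have hmeas : AEStronglyMeasurable (fun u : ℝ => u ^ (q - 1) * √(1 + u ^ 2) ^ (-m)) := by
    fun_prop
  rw [← Ioc_union_Ioi_eq_Ioi zero_le_one]
  refine IntegrableOn.union ?_ ?_
  · have hint : IntegrableOn (fun u : ℝ => u ^ (q - 1)) (Ioc 0 1) :=
      (intervalIntegrable_iff_integrableOn_Ioc_of_le zero_le_one).1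
        (intervalIntegral.intervalIntegrable_rpow' (by linarith))
    refine Integrable.mono' hint hmeas.restrict
      (ae_restrict_of_forall_mem measurableSet_Ioc fun u ⟨hu, _⟩ => ?_)
    rw [norm_of_nonneg (by positivity)]
    exact mul_le_of_le_one_right (by positivity)
      (rpow_le_one_of_one_le_of_nonpos (one_le_sqrt.2 (by nlinarith)) (by linarith))
  · refine Integrable.mono' (integrableOn_Ioi_rpow_of_lt (show q - 1 + -m < -1 by linarith)
      zero_lt_one) hmeas.restrict (ae_restrict_of_forall_mem measurableSet_Ioi fun u hu => ?_)
    have hu : 0 < u := zero_lt_one.trans hu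
    rw [norm_of_nonneg (by positivity), rpow_add hu]
    gcongr u ^ (q - 1) * ?_
    exact rpow_le_rpow_of_nonpos hu (le_sqrt_one_add_sq u) (by linarith)

theorem integral_Ioi_rpow_mul_sqrt_one_add_sq_rpow_neg_pos {q m : ℝ} (hq : 0 < q) (hqm : q < m) :
    0 < ∫ u in Ioi 0, u ^ (q - 1) * √(1 + u ^ 2) ^ (-m) := by
  have hpos : ∀ u ∈ Ioi (0 : ℝ), 0 < u ^ (q - 1) * √(1 + u ^ 2) ^ (-m) :=
    fun u (hu : 0 < u) => by positivity
  rw [setIntegral_pos_iff_support_of_nonneg_ae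
      (ae_restrict_of_forall_mem measurableSet_Ioi fun u hu => (hpos u hu).le)
      (integrableOn_Ioi_rpow_mul_sqrt_one_add_sq_rpow_neg hq hqm),
    inter_eq_right.2 fun u hu => Function.mem_support.2 (hpos u hu).ne', volume_Ioi]
  exact ENNReal.zero_lt_top

theorem exists_sqrt_one_add_sq_rpow_neg_mul_exp_neg_le {m : ℝ} (hm : 0 ≤ m) :
    ∃ K > 0, ∀ s τ d : ℝ, 0 ≤ s → s ≤ τ → τ - s ≤ d →
      √(1 + s ^ 2) ^ (-m) * exp (-d) ≤ K * (√(1 + τ ^ 2) ^ (-m) * exp (-(d / 2))) := by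
  obtain ⟨c, hc, hdecay⟩ :=
    exists_exp_neg_mul_le_mul_sqrt_one_add_sq_rpow_neg hm (show (0 : ℝ) < 1 / 4 by norm_num)
  refine ⟨max (2 ^ m) c, by positivity, fun s τ d hs hsτ hd => ?_⟩
  rcases le_or_gt τ (2 * s) with hnear | hfar
  · have hbracket : √(1 + s ^ 2) ^ (-m) ≤ 2 ^ m * √(1 + τ ^ 2) ^ (-m) := by
      refine rpow_neg_le_mul_rpow_neg hm two_pos (by positivity) (sqrt_le_iff.2 ⟨by positivity, ?_⟩)
      rw [mul_pow, sq_sqrt (by positivity)]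
      nlinarith
    calc √(1 + s ^ 2) ^ (-m) * exp (-d)
        ≤ 2 ^ m * √(1 + τ ^ 2) ^ (-m) * exp (-(d / 2)) := by
          gcongr
          linarith
      _ ≤ max (2 ^ m) c * (√(1 + τ ^ 2) ^ (-m) * exp (-(d / 2))) := by
          rw [mul_assoc]; gcongr; exact le_max_left _ _
  · have hbracket : √(1 + s ^ 2) ^ (-m) ≤ 1 :=
      rpow_le_one_of_one_le_of_nonpos (one_le_sqrt.2 (by nlinarith)) (neg_nonpos.2 hm)
    have hexp : exp (-(d / 2)) ≤ c * √(1 + τ ^ 2) ^ (-m) :=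
      (exp_le_exp.2 (by linarith)).trans (hdecay τ (by linarith))
    calc √(1 + s ^ 2) ^ (-m) * exp (-d) ≤ 1 * (exp (-(d / 2)) * exp (-(d / 2))) := by
          rw [← exp_add]; gcongr; linarith
      _ ≤ c * √(1 + τ ^ 2) ^ (-m) * exp (-(d / 2)) := by rw [one_mul]; gcongr
      _ ≤ max (2 ^ m) c * (√(1 + τ ^ 2) ^ (-m) * exp (-(d / 2))) := by
          rw [mul_assoc]; gcongr; exact le_max_right _ _

def coneMajorant (m q τ δ lam : ℝ) : ℝ :=
  lam ^ (q - 1) * √(1 + (τ * lam) ^ 2) ^ (-m) * exp (-(δ * lam))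

theorem exists_integrand_le_coneMajorant {m R : ℝ} (hm : 0 ≤ m) (hR : 0 ≤ R) :
    ∃ K > 0, ∀ {c t s lam y : ℝ} (q : ℝ), 0 < c → 0 ≤ t → 0 ≤ s → s ≤ t + R →
      lam ∈ Ioc (0 : ℝ) 1 →
      c * √(1 + (lam * s) ^ 2) ^ (-m) * exp (lam * s) < y ∧
        y < c⁻¹ * √(1 + (lam * s) ^ 2) ^ (-m) * exp (lam * s) →
      0 ≤ exp (-lam * t) * y * lam ^ (q - 1) ∧
        exp (-lam * t) * y * lam ^ (q - 1) ≤
          c⁻¹ * K * coneMajorant m q (t + R) ((t + R + 1 - s) / 2) lam := by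
  obtain ⟨K, hK, hcone⟩ := exists_sqrt_one_add_sq_rpow_neg_mul_exp_neg_le hm
  refine ⟨exp (R + 1) * K, by positivity, ?_⟩
  intro c t s lam y q hc ht hs hsτ ⟨hlam0, hlam1⟩ hy
  have hy0 : 0 < y := lt_of_le_of_lt (by positivity) hy.1
  refine ⟨by positivity, ?_⟩
  have hexp : exp (-lam * t) * exp (lam * s) =
      exp (lam * (R + 1)) * exp (-(lam * (t + R + 1 - s))) := by
    rw [← exp_add, ← exp_add]; ring_nf
  have hdecay := hcone (lam * s) ((t + R) * lam) (lam * (t + R + 1 - s)) (by positivity)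
    (by nlinarith) (by nlinarith)
  rw [show lam * (t + R + 1 - s) / 2 = (t + R + 1 - s) / 2 * lam by ring] at hdecay
  calc exp (-lam * t) * y * lam ^ (q - 1)
      ≤ exp (-lam * t) * (c⁻¹ * √(1 + (lam * s) ^ 2) ^ (-m) * exp (lam * s)) * lam ^ (q - 1) := by
        gcongr; exact hy.2.le
    _ = c⁻¹ * lam ^ (q - 1) * √(1 + (lam * s) ^ 2) ^ (-m) *
          (exp (-lam * t) * exp (lam * s)) := by ring
    _ = c⁻¹ * lam ^ (q - 1) * exp (lam * (R + 1)) *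
          (√(1 + (lam * s) ^ 2) ^ (-m) * exp (-(lam * (t + R + 1 - s)))) := by
        rw [hexp]; ring
    _ ≤ c⁻¹ * lam ^ (q - 1) * exp (R + 1) * (K * (√(1 + ((t + R) * lam) ^ 2) ^ (-m) *
          exp (-((t + R + 1 - s) / 2 * lam)))) := by
        gcongr; nlinarith
    _ = _ := by unfold coneMajorant; ring

theorem setIntegral_Ioc_le_of_le_coneMajorant_of_lt {m q τ δ B : ℝ} (hq : 0 < q) (hqm : q < m)
    (hτ : 0 < τ) (hδ : 0 ≤ δ) (hB : 0 ≤ B) {f : ℝ → ℝ}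
    (hf : ∀ lam ∈ Ioc (0 : ℝ) 1, 0 ≤ f lam ∧ f lam ≤ B * coneMajorant m q τ δ lam) :
    ∫ lam in Ioc 0 1, f lam ≤ B * (∫ u in Ioi 0, u ^ (q - 1) * √(1 + u ^ 2) ^ (-m)) * τ ^ (-q) :=
  calc ∫ lam in Ioc 0 1, f lam
      ≤ ∫ lam in Ioi 0, B * (lam ^ (q - 1) * √(1 + (τ * lam) ^ 2) ^ (-m)) := by
        refine setIntegral_le_setIntegral_of_subset measurableSet_Ioc measurableSet_Ioi
          Ioc_subset_Ioi_self (fun lam hlam => ⟨(hf lam hlam).1, (hf lam hlam).2.trans ?_⟩)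
          (fun lam (hlam : 0 < lam) => by positivity)
          ((IntegrableOn.rpow_sub_one_mul_comp_mul_left hτ
            (integrableOn_Ioi_rpow_mul_sqrt_one_add_sq_rpow_neg hq hqm)).const_mul B)
        have := hlam.1
        unfold coneMajorant
        gcongr B * ?_
        exact mul_le_of_le_one_right (by positivity) (exp_le_one_iff.2 (by nlinarith))
    _ = B * (∫ u in Ioi 0, u ^ (q - 1) * √(1 + u ^ 2) ^ (-m)) * τ ^ (-q) := by
        rw [integral_const_mul,
          integral_Ioi_rpow_sub_one_mul_comp_mul_left (fun u => √(1 + u ^ 2) ^ (-m)) q hτ]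
        ring

theorem setIntegral_Ioc_le_of_le_coneMajorant_of_gt {m q τ δ B : ℝ} (hm : 0 ≤ m) (hmq : m < q)
    (hτ : 0 < τ) (hδ : 0 < δ) (hB : 0 ≤ B) {f : ℝ → ℝ}
    (hf : ∀ lam ∈ Ioc (0 : ℝ) 1, 0 ≤ f lam ∧ f lam ≤ B * coneMajorant m q τ δ lam) :
    ∫ lam in Ioc 0 1, f lam ≤ B * Gamma (q - m) * τ ^ (-m) * δ ^ (m - q) := by
  have hint : IntegrableOn (fun lam => lam ^ (q - m - 1) * exp (-(δ * lam))) (Ioi 0) := by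
    simpa only [rpow_one, neg_mul] using
      integrableOn_rpow_mul_exp_neg_mul_rpow (show -1 < q - m - 1 by linarith) one_pos hδ
  calc ∫ lam in Ioc 0 1, f lam
      ≤ ∫ lam in Ioi 0, B * τ ^ (-m) * (lam ^ (q - m - 1) * exp (-(δ * lam))) := by
        refine setIntegral_le_setIntegral_of_subset measurableSet_Ioc measurableSet_Ioi
          Ioc_subset_Ioi_self (fun lam hlam => ⟨(hf lam hlam).1, (hf lam hlam).2.trans ?_⟩)
          (fun lam (hlam : 0 < lam) => by positivity) (hint.const_mul _)
        have hlam : 0 < lam := hlam.1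
        calc B * coneMajorant m q τ δ lam
            ≤ B * (lam ^ (q - 1) * (τ * lam) ^ (-m) * exp (-(δ * lam))) := by
              unfold coneMajorant
              gcongr B * (_ * ?_ * _)
              exact rpow_le_rpow_of_nonpos (by positivity) (le_sqrt_one_add_sq _) (by linarith)
          _ = B * τ ^ (-m) * (lam ^ (q - m - 1) * exp (-(δ * lam))) := by
              rw [mul_rpow hτ.le hlam.le, show q - m - 1 = q - 1 + -m by ring, rpow_add hlam]
              ring
    _ = B * Gamma (q - m) * τ ^ (-m) * δ ^ (m - q) := by
        rw [integral_const_mul, integral_rpow_mul_exp_neg_mul_Ioi (by linarith) hδ, one_div,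
          inv_rpow hδ.le, ← rpow_neg hδ.le, neg_sub]
        ring

/-- Upper bounds for the test function `b_q(t,x) = ∫₀¹ e^{−λt} φ_λ(x) λ^{q−1} dλ` on the light
cone `|x| ≤ t + R`: `b_q ≲ (t+R)^{−q}` for `0 < q < (n−1)/2`, and
`b_q ≲ (t+R)^{−(n−1)/2}(t+R+1−|x|)^{(n−1)/2−q}` for `q > (n−1)/2`. -/
theorem bq_upper_bound
    (n : ℕ) (hn : 2 ≤ n) (R c₁ q : ℝ) (hR : 0 < R) (hc₁ : c₁ ∈ Ioo (0 : ℝ) 1) :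
    ∃ C > (0 : ℝ), ∀ φ : ℝ → Eucl n → ℝ,
      Measurable (fun p : ℝ × Eucl n => φ p.1 p.2) →
      (∀ lam : ℝ, lam ∈ Ioc (0 : ℝ) 1 → ∀ x : Eucl n,
        c₁ * Real.sqrt (1 + (lam * ‖x‖) ^ 2) ^ (-(((n : ℝ) - 1) / 2)) *
            Real.exp (lam * ‖x‖) < φ lam x ∧
        φ lam x < c₁⁻¹ * Real.sqrt (1 + (lam * ‖x‖) ^ 2) ^ (-(((n : ℝ) - 1) / 2)) *
            Real.exp (lam * ‖x‖)) →
      ∀ t : ℝ, 0 ≤ t → ∀ x : Eucl n, ‖x‖ ≤ t + R →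
        ((0 < q → q < ((n : ℝ) - 1) / 2 →
          (∫ lam in Ioc (0 : ℝ) 1, Real.exp (-lam * t) * φ lam x * lam ^ (q - 1))
            ≤ C * (t + R) ^ (-q)) ∧
         (((n : ℝ) - 1) / 2 < q →
          (∫ lam in Ioc (0 : ℝ) 1, Real.exp (-lam * t) * φ lam x * lam ^ (q - 1))
            ≤ C * (t + R) ^ (-(((n : ℝ) - 1) / 2)) *
              (t + R + 1 - ‖x‖) ^ (((n : ℝ) - 1) / 2 - q))) := by
  set m : ℝ := ((n : ℝ) - 1) / 2 with hm_def
  have hm : 0 < m := by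
    have : (2 : ℝ) ≤ n := by exact_mod_cast hn
    rw [hm_def]; linarith
  have hc := hc₁.1
  obtain ⟨K, hK, hintegrand⟩ := exists_integrand_le_coneMajorant hm.le hR.le
  by_cases hhigh : m < q
  · refine ⟨c₁⁻¹ * K * Gamma (q - m) * 2 ^ (q - m), by positivity,
      fun φ _ hφ t ht x hx => ⟨fun _ hlow => (hlow.not_gt hhigh).elim, fun _ => ?_⟩⟩
    have hd : 0 < t + R + 1 - ‖x‖ := by linarith
    calc _ ≤ c₁⁻¹ * K * Gamma (q - m) * (t + R) ^ (-m) * ((t + R + 1 - ‖x‖) / 2) ^ (m - q) :=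
          setIntegral_Ioc_le_of_le_coneMajorant_of_gt hm.le hhigh (by positivity) (by positivity)
            (by positivity) fun lam hlam =>
              hintegrand q hc ht (norm_nonneg x) hx hlam (hφ lam hlam x)
      _ = _ := by
          rw [div_rpow hd.le zero_le_two, div_eq_mul_inv, ← rpow_neg zero_le_two, neg_sub]
          ring
  by_cases hlow : 0 < q ∧ q < m
  · refine ⟨c₁⁻¹ * K * ∫ u in Ioi 0, u ^ (q - 1) * √(1 + u ^ 2) ^ (-m),
      mul_pos (by positivity) (integral_Ioi_rpow_mul_sqrt_one_add_sq_rpow_neg_pos hlow.1 hlow.2),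
      fun φ _ hφ t ht x hx => ⟨fun _ _ => ?_, fun h => (hhigh h).elim⟩⟩
    exact setIntegral_Ioc_le_of_le_coneMajorant_of_lt hlow.1 hlow.2 (by positivity)
      (by linarith) (by positivity) fun lam hlam =>
        hintegrand q hc ht (norm_nonneg x) hx hlam (hφ lam hlam x)
  · exact ⟨1, one_pos, fun _ _ _ _ _ _ _ =>
      ⟨fun h₁ h₂ => (hlow ⟨h₁, h₂⟩).elim, fun h => (hhigh h).elim⟩⟩

end
end

section
/- Let p > 1, c > 0. There exists a constant C > 0, depending only on p and c, with the following property: for every ε ∈ (0,1) and every T* with 4 < T* ≤ ∞, if Y : [2, T*) → [0,∞) is differentiable and satisfies T·Y′(T) ≥ c ε^p and T·Y′(T) ≥ c Y(T)^p (ln T)^{1−p} for all T ∈ [2, T*), then T* < ∞ and ln T* ≤ C ε^{−p(p−1)}. -/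
open Set Real

/-!
Write `δ = c ε^p`, `K = (c / 4)^{1-p} / ((p - 1) c)` and `S = (K + 2) ε^{-p(p-1)}`, and suppose
`Y` lives up to `T₁ = exp (2S)`. Integrating `T Y' ≥ δ` gives `Y ≥ δ S / 2` on `[exp S, T₁]`.
There `(ln T)^{1-p} ≥ (2S)^{1-p}`, so `T Y' ≥ c (2S)^{1-p} Y^p`, and integrating this for `Y^{1-p}`
over `ln T ∈ [S, 2S]` gives `(p - 1) c S ≤ (δ / 4)^{1-p} = K (p - 1) c ε^{-p(p-1)}`, which
contradicts the choice of `S`. Hence `T* ≤ T₁`, i.e. `ln T* ≤ 2S`.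
-/

theorem sub_le_sub_of_hasDerivAt_le {f g f' g' : ℝ → ℝ} {a b : ℝ} (hab : a ≤ b)
    (hf : ∀ x ∈ Icc a b, HasDerivAt f (f' x) x) (hg : ∀ x ∈ Icc a b, HasDerivAt g (g' x) x)
    (hle : ∀ x ∈ Icc a b, g' x ≤ f' x) : g b - g a ≤ f b - f a := by
  have hfg (x) (hx : x ∈ Icc a b) : HasDerivAt (fun y => f y - g y) (f' x - g' x) x :=
    (hf x hx).sub (hg x hx)
  have hmono : MonotoneOn (fun y => f y - g y) (Icc a b) :=
    monotoneOn_of_hasDerivWithinAt_nonneg (convex_Icc a b)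
      (fun x hx => (hfg x hx).continuousAt.continuousWithinAt)
      (fun x hx => (hfg x (interior_subset hx)).hasDerivWithinAt)
      (fun x hx => sub_nonneg.2 (hle x (interior_subset hx)))
  have := hmono ⟨le_rfl, hab⟩ ⟨hab, le_rfl⟩ hab
  linarith

theorem mul_log_sub_le_sub_of_le_mul_deriv {Y Y' : ℝ → ℝ} {δ a b : ℝ} (ha : 0 < a) (hab : a ≤ b)
    (hY : ∀ T ∈ Icc a b, HasDerivAt Y (Y' T) T) (h : ∀ T ∈ Icc a b, δ ≤ T * Y' T) :
    δ * (log b - log a) ≤ Y b - Y a := by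
  rw [mul_sub]
  refine sub_le_sub_of_hasDerivAt_le hab hY
    (fun T hT => (hasDerivAt_log (ha.trans_le hT.1).ne').const_mul δ) fun T hT => ?_
  have hT0 : 0 < T := ha.trans_le hT.1
  rw [← div_eq_mul_inv, div_le_iff₀ hT0, mul_comm]
  exact h T hT

theorem mul_log_sub_le_rpow_sub_of_mul_rpow_le_mul_deriv {Y Y' : ℝ → ℝ} {p κ a b : ℝ}
    (hp : 1 ≤ p) (ha : 0 < a) (hab : a ≤ b) (hpos : ∀ T ∈ Icc a b, 0 < Y T)
    (hY : ∀ T ∈ Icc a b, HasDerivAt Y (Y' T) T) (h : ∀ T ∈ Icc a b, κ * Y T ^ p ≤ T * Y' T) :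
    (p - 1) * κ * (log b - log a) ≤ Y a ^ (1 - p) - Y b ^ (1 - p) := by
  rw [mul_sub, show Y a ^ (1 - p) - Y b ^ (1 - p) = -Y b ^ (1 - p) - -Y a ^ (1 - p) by ring]
  refine sub_le_sub_of_hasDerivAt_le hab
    (fun T hT => ((hY T hT).rpow_const (Or.inl (hpos T hT).ne')).neg)
    (fun T hT => (hasDerivAt_log (ha.trans_le hT.1).ne').const_mul ((p - 1) * κ)) fun T hT => ?_
  have hT0 : 0 < T := ha.trans_le hT.1
  have hYp : 0 < Y T ^ p := rpow_pos_of_pos (hpos T hT) p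
  have hκ : κ / T ≤ Y' T / Y T ^ p := by
    rw [div_le_div_iff₀ hT0 hYp, mul_comm (Y' T)]
    exact h T hT
  have hpow : Y T ^ (1 - p - 1) = 1 / Y T ^ p := by
    rw [show 1 - p - 1 = -p by ring, rpow_neg (hpos T hT).le, one_div]
  calc (p - 1) * κ * T⁻¹ = (p - 1) * (κ / T) := by ring
    _ ≤ (p - 1) * (Y' T / Y T ^ p) := mul_le_mul_of_nonneg_left hκ (by linarith)
    _ = -(Y' T * (1 - p) * Y T ^ (1 - p - 1)) := by rw [hpow]; ring

theorem mul_half_le_of_le_mul_deriv {Y Y' : ℝ → ℝ} {δ S b T : ℝ} (hδ : 0 ≤ δ)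
    (hS : 2 * log 2 ≤ S) (hY₂ : 0 ≤ Y 2) (hY : ∀ x ∈ Icc 2 b, HasDerivAt Y (Y' x) x)
    (h : ∀ x ∈ Icc 2 b, δ ≤ x * Y' x) (hT : T ∈ Icc (exp S) b) : δ * (S / 2) ≤ Y T := by
  have h2T : 2 ≤ T := by
    refine le_trans ?_ hT.1
    rw [← log_le_iff_le_exp two_pos]
    linarith [log_pos one_lt_two]
  have hgrowth := mul_log_sub_le_sub_of_le_mul_deriv two_pos h2T
    (fun x hx => hY x ⟨hx.1, hx.2.trans hT.2⟩) (fun x hx => h x ⟨hx.1, hx.2.trans hT.2⟩)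
  have hlogT : S ≤ log T := (le_log_iff_exp_le (by linarith)).2 hT.1
  nlinarith

theorem mul_le_rpow_of_critical_ode {p c δ S : ℝ} {Y Y' : ℝ → ℝ} (hp : 1 ≤ p) (hc : 0 ≤ c)
    (hδ : 0 < δ) (hS : 2 * log 2 ≤ S)
    (H : ∀ T ∈ Icc 2 (exp (2 * S)), 0 ≤ Y T ∧ HasDerivAt Y (Y' T) T ∧ δ ≤ T * Y' T ∧
      c * Y T ^ p * log T ^ (1 - p) ≤ T * Y' T) :
    (p - 1) * c * S ≤ (δ / 4) ^ (1 - p) := by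
  have hlog2 : 0 < log 2 := log_pos one_lt_two
  have hS0 : 0 < S := by linarith
  have h2T₀ : 2 ≤ exp S := by
    rw [← log_le_iff_le_exp two_pos]
    linarith
  have hT₀T₁ : exp S ≤ exp (2 * S) := exp_le_exp.2 (by linarith)
  have hsub : Icc (exp S) (exp (2 * S)) ⊆ Icc 2 (exp (2 * S)) := Icc_subset_Icc_left h2T₀
  have hlow : ∀ T ∈ Icc (exp S) (exp (2 * S)), δ * (S / 2) ≤ Y T :=
    fun T => mul_half_le_of_le_mul_deriv hδ.le hS (H 2 ⟨le_rfl, h2T₀.trans hT₀T₁⟩).1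
      (fun x hx => (H x hx).2.1) (fun x hx => (H x hx).2.2.1)
  have hYpos : ∀ T ∈ Icc (exp S) (exp (2 * S)), 0 < Y T :=
    fun T hT => (by positivity : 0 < δ * (S / 2)).trans_le (hlow T hT)
  have hsuper : ∀ T ∈ Icc (exp S) (exp (2 * S)),
      c * (2 * S) ^ (1 - p) * Y T ^ p ≤ T * Y' T := by
    intro T hT
    have hT0 : 0 < T := (exp_pos S).trans_le hT.1
    have hlogT : S ≤ log T := (le_log_iff_exp_le hT0).2 hT.1
    have hlogT' : log T ≤ 2 * S := (log_le_iff_le_exp hT0).2 hT.2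
    have hrpow : (2 * S) ^ (1 - p) ≤ log T ^ (1 - p) :=
      rpow_le_rpow_of_nonpos (by linarith) hlogT' (by linarith)
    calc c * (2 * S) ^ (1 - p) * Y T ^ p = c * Y T ^ p * (2 * S) ^ (1 - p) := by ring
      _ ≤ c * Y T ^ p * log T ^ (1 - p) :=
        mul_le_mul_of_nonneg_left hrpow (mul_nonneg hc (rpow_nonneg (H T (hsub hT)).1 p))
      _ ≤ T * Y' T := (H T (hsub hT)).2.2.2
  have hdecay := mul_log_sub_le_rpow_sub_of_mul_rpow_le_mul_deriv hp (exp_pos S) hT₀T₁ hYpos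
    (fun T hT => (H T (hsub hT)).2.1) hsuper
  rw [log_exp, log_exp] at hdecay
  have hYT₁ : 0 ≤ Y (exp (2 * S)) ^ (1 - p) := rpow_nonneg (H _ ⟨h2T₀.trans hT₀T₁, le_rfl⟩).1 _
  have hYT₀ : Y (exp S) ^ (1 - p) ≤ (δ * (S / 2)) ^ (1 - p) :=
    rpow_le_rpow_of_nonpos (by positivity) (hlow _ ⟨le_rfl, hT₀T₁⟩) (by linarith)
  have hkey : (p - 1) * c * S * (4 * (S / 2)) ^ (1 - p) ≤ (δ * (S / 2)) ^ (1 - p) := by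
    rw [show 4 * (S / 2) = 2 * S by ring]
    linarith
  have h4 : (0 : ℝ) < 4 ^ (1 - p) := by positivity
  have hS2 : 0 < (S / 2) ^ (1 - p) := by positivity
  rw [mul_rpow (by norm_num) (by positivity), mul_rpow hδ.le (by positivity)] at hkey
  rw [div_rpow hδ.le (by norm_num), le_div_iff₀ h4]
  nlinarith

/-- The critical-case ODE lemma: if `Y ≥ 0` on `[2, T*)` satisfies `T·Y′ ≥ cε^p` and
`T·Y′ ≥ cY^p (ln T)^{1−p}`, then `T* < ∞` and `ln T* ≤ C ε^{−p(p−1)}`. -/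
theorem critical_ode_lemma (p c : ℝ) (hp : 1 < p) (hc : 0 < c) :
    ∃ C > (0 : ℝ), ∀ ε : ℝ, ε ∈ Ioo (0 : ℝ) 1 →
      ∀ Tstar : EReal, (4 : EReal) < Tstar →
      ∀ Y Y' : ℝ → ℝ,
        (∀ T : ℝ, 2 ≤ T → (T : EReal) < Tstar →
          0 ≤ Y T ∧ HasDerivAt Y (Y' T) T ∧
          c * ε ^ p ≤ T * Y' T ∧
          c * Y T ^ p * Real.log T ^ (1 - p) ≤ T * Y' T) →
        Tstar ≠ ⊤ ∧ Real.log Tstar.toReal ≤ C * ε ^ (-(p * (p - 1))) := by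
  have hp1 : 0 < p - 1 := by linarith
  set K := (c / 4) ^ (1 - p) / ((p - 1) * c)
  refine ⟨2 * (K + 2), by positivity, ?_⟩
  rintro ε ⟨hε0, hε1⟩ Tstar hT4 Y Y' H
  set e := ε ^ (-(p * (p - 1)))
  have he : 1 ≤ e := one_le_rpow_of_pos_of_le_one_of_nonpos hε0 hε1.le (by nlinarith)
  have hK : (p - 1) * c * K = (c / 4) ^ (1 - p) := mul_div_cancel₀ _ (by positivity)
  have hrpow : (c * ε ^ p / 4) ^ (1 - p) = (p - 1) * c * (K * e) := by
    rw [mul_div_right_comm, mul_rpow (by positivity) (by positivity), ← rpow_mul hε0.le,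
      show p * (1 - p) = -(p * (p - 1)) by ring, ← mul_assoc, hK]
  have hT : Tstar ≤ (exp (2 * ((K + 2) * e)) : EReal) := by
    by_contra! hlt
    have hS : 2 * log 2 ≤ (K + 2) * e := by nlinarith [log_two_lt_d9, (by positivity : 0 ≤ K)]
    have := mul_le_rpow_of_critical_ode hp.le hc.le (by positivity) hS
      fun T hT => H T hT.1 ((EReal.coe_le_coe_iff.2 hT.2).trans_lt hlt)
    rw [hrpow] at this
    nlinarith [mul_pos hp1 hc]
  lift Tstar to ℝ using ⟨ne_top_of_le_ne_top (EReal.coe_ne_top _) hT, ne_bot_of_gt hT4⟩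
  have ht4 : (4 : ℝ) < Tstar := EReal.coe_lt_coe_iff.1 hT4
  refine ⟨EReal.coe_ne_top _, ?_⟩
  rw [EReal.toReal_coe, log_le_iff_le_exp (by linarith)]
  convert (EReal.coe_le_coe_iff.1 hT) using 2
  ring
end

section
/- Let n ≥ 2, β > 1, μ ≥ 0, λ ∈ (0,1], and let D : [0,∞) → ℝ be continuous with 0 ≤ D(r) ≤ μ(1+r)^{−β}. Let f ∈ C²([0,1]) be a radial profile satisfying 0 < f(r) ≤ 1 on [0,1] and the ODE (r^{n−1}f′(r))′ = (λ^{−1}D(r/λ) + 1) r^{n−1} f(r) on (0,1], with r^{n−1}f′(r) → 0 as r → 0⁺. Then f′(r) ≤ μ/(n−1) + r/n for all r ∈ (0,1]. -/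
/-!
The flux `r^(n-1) f'` vanishes at `0⁺` and has derivative `(λ⁻¹ D(r/λ) + 1) r^(n-1) f`.
Since `f ≤ 1` and `y D(y) ≤ μ y (1+y)^(-β) ≤ μ` for `β ≥ 1`, this derivative is at most
`μ r^(n-2) + r^(n-1)`, the derivative of the barrier `(μ/(n-1) + r/n) r^(n-1)`, which also
vanishes at `0⁺`. Comparing the two fluxes and dividing by `r^(n-1)` gives the bound.
-/

open Set Filter Topology

theorem le_of_hasDerivAt_le_of_tendsto_nhdsGT {u v u' v' : ℝ → ℝ} {a b L : ℝ} (hab : a < b)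
    (hu : ∀ x ∈ Ioc a b, HasDerivAt u (u' x) x) (hv : ∀ x ∈ Ioc a b, HasDerivAt v (v' x) x)
    (hle : ∀ x ∈ Ioo a b, u' x ≤ v' x)
    (hu_lim : Tendsto u (𝓝[>] a) (𝓝 L)) (hv_lim : Tendsto v (𝓝[>] a) (𝓝 L)) :
    u b ≤ v b := by
  have hderiv : ∀ x ∈ Ioc a b, HasDerivAt (v - u) (v' x - u' x) x :=
    fun x hx => (hv x hx).sub (hu x hx)
  have hmono : MonotoneOn (v - u) (Ioc a b) := by
    refine monotoneOn_of_hasDerivWithinAt_nonneg (f' := fun x => v' x - u' x) (convex_Ioc a b)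
      (fun x hx => (hderiv x hx).continuousAt.continuousWithinAt) (fun x hx => ?_) (fun x hx => ?_)
    · exact (hderiv x (interior_subset hx)).hasDerivWithinAt
    · rw [interior_Ioc] at hx
      exact sub_nonneg.mpr (hle x hx)
  have hev : ∀ᶠ x in 𝓝[>] a, (v - u) x ≤ (v - u) b := by
    filter_upwards [Ioo_mem_nhdsGT hab] with x hx
    exact hmono ⟨hx.1, hx.2.le⟩ ⟨hab, le_rfl⟩ hx.2.le
  have hlim : Tendsto (v - u) (𝓝[>] a) (𝓝 0) := by
    rw [← sub_self L]; exact hv_lim.sub hu_lim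
  simpa [sub_nonneg] using le_of_tendsto hlim hev

theorem mul_one_add_rpow_neg_le_one {y β : ℝ} (hy : 0 ≤ y) (hβ : 1 ≤ β) :
    y * (1 + y) ^ (-β) ≤ 1 := by
  have hpos : 0 < 1 + y := by linarith
  calc y * (1 + y) ^ (-β) ≤ y * (1 + y) ^ (-1 : ℝ) :=
        mul_le_mul_of_nonneg_left
          (Real.rpow_le_rpow_of_exponent_le (by linarith) (by linarith)) hy
    _ = y / (1 + y) := by rw [Real.rpow_neg_one, div_eq_mul_inv]
    _ ≤ 1 := (div_le_one hpos).mpr (by linarith)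

theorem rescaled_weight_mul_le {D : ℝ → ℝ} {β μ lam x : ℝ} (hβ : 1 ≤ β) (hμ : 0 ≤ μ)
    (hlam : 0 < lam) (hx : 0 ≤ x) (hDle : D (x / lam) ≤ μ * (1 + x / lam) ^ (-β)) :
    lam⁻¹ * D (x / lam) * x ≤ μ := by
  have hy : 0 ≤ x / lam := div_nonneg hx hlam.le
  calc lam⁻¹ * D (x / lam) * x = D (x / lam) * (x / lam) := by ring
    _ ≤ μ * (1 + x / lam) ^ (-β) * (x / lam) := mul_le_mul_of_nonneg_right hDle hy
    _ = μ * (x / lam * (1 + x / lam) ^ (-β)) := by ring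
    _ ≤ μ * 1 := mul_le_mul_of_nonneg_left (mul_one_add_rpow_neg_le_one hy hβ) hμ
    _ = μ := mul_one μ

theorem hasDerivAt_radial_barrier {n : ℕ} (hn : 2 ≤ n) (μ x : ℝ) :
    HasDerivAt (fun s : ℝ => (μ / ((n : ℝ) - 1) + s / n) * s ^ (n - 1))
      (μ * x ^ (n - 2) + x ^ (n - 1)) x := by
  have hn1 : ((n - 1 : ℕ) : ℝ) = (n : ℝ) - 1 := by
    rw [Nat.cast_sub (by omega)]; norm_num
  have hn0 : (n : ℝ) - 1 ≠ 0 := by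
    rw [← hn1]; exact_mod_cast (by omega : n - 1 ≠ 0)
  have hsplit : ∀ s : ℝ, s ^ n = s * s ^ (n - 1) := fun s => by
    rw [← pow_succ']; congr 1; omega
  have hpoly := ((hasDerivAt_pow (n - 1) x).const_mul (μ / ((n : ℝ) - 1))).add
    ((hasDerivAt_pow n x).div_const (n : ℝ))
  have hfun : (fun s : ℝ => (μ / ((n : ℝ) - 1) + s / n) * s ^ (n - 1))
      = fun s => μ / ((n : ℝ) - 1) * s ^ (n - 1) + s ^ n / n := by
    ext s; rw [hsplit]; ring
  rw [hfun]
  refine hpoly.congr_deriv ?_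
  rw [hn1, show n - 1 - 1 = n - 2 by omega]
  have : (n : ℝ) ≠ 0 := by positivity
  field_simp

theorem tendsto_radial_barrier_nhdsGT_zero {n : ℕ} (hn : 2 ≤ n) (μ : ℝ) :
    Tendsto (fun s : ℝ => (μ / ((n : ℝ) - 1) + s / n) * s ^ (n - 1)) (𝓝[>] 0) (𝓝 0) := by
  have hcont : Continuous (fun s : ℝ => (μ / ((n : ℝ) - 1) + s / n) * s ^ (n - 1)) := by
    fun_prop
  simpa [zero_pow (by omega : n - 1 ≠ 0)] using (hcont.tendsto 0).mono_left nhdsWithin_le_nhds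

theorem radial_ode_rhs_le {n : ℕ} (hn : 2 ≤ n) {D f : ℝ → ℝ} {β μ lam x : ℝ}
    (hβ : 1 ≤ β) (hμ : 0 ≤ μ) (hlam : 0 < lam) (hx : 0 ≤ x) (hD0 : 0 ≤ D (x / lam))
    (hDle : D (x / lam) ≤ μ * (1 + x / lam) ^ (-β)) (hf : f x ≤ 1) :
    (lam⁻¹ * D (x / lam) + 1) * x ^ (n - 1) * f x ≤ μ * x ^ (n - 2) + x ^ (n - 1) := by
  have hcoef : 0 ≤ (lam⁻¹ * D (x / lam) + 1) * x ^ (n - 1) := by positivity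
  have hweight : lam⁻¹ * D (x / lam) * x ^ (n - 1) ≤ μ * x ^ (n - 2) := by
    rw [show x ^ (n - 1) = x * x ^ (n - 2) by rw [← pow_succ']; congr 1; omega, ← mul_assoc]
    exact mul_le_mul_of_nonneg_right
      (rescaled_weight_mul_le hβ hμ hlam hx hDle) (by positivity)
  calc (lam⁻¹ * D (x / lam) + 1) * x ^ (n - 1) * f x
      ≤ (lam⁻¹ * D (x / lam) + 1) * x ^ (n - 1) := mul_le_of_le_one_right hcoef hf
    _ ≤ μ * x ^ (n - 2) + x ^ (n - 1) := by linarith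

theorem rescaled_profile_deriv_bound_general
    (n : ℕ) (hn : 2 ≤ n) (β μ lam : ℝ) (hβ : 1 < β) (hμ : 0 ≤ μ)
    (hlam : lam ∈ Ioc (0 : ℝ) 1)
    (D : ℝ → ℝ)
    (hD0 : ∀ r : ℝ, 0 ≤ r → 0 ≤ D r)
    (hDle : ∀ r : ℝ, 0 ≤ r → D r ≤ μ * (1 + r) ^ (-β))
    (f f' : ℝ → ℝ)
    (hf : ∀ r ∈ Icc (0 : ℝ) 1, 0 < f r ∧ f r ≤ 1)
    (hode : ∀ r ∈ Ioc (0 : ℝ) 1,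
      HasDerivAt (fun s : ℝ => s ^ (n - 1) * f' s)
        ((lam⁻¹ * D (r / lam) + 1) * r ^ (n - 1) * f r) r)
    (hlim : Tendsto (fun r : ℝ => r ^ (n - 1) * f' r) (nhdsWithin 0 (Ioi 0)) (nhds 0)) :
    ∀ r ∈ Ioc (0 : ℝ) 1, f' r ≤ μ / ((n : ℝ) - 1) + r / (n : ℝ) := by
  intro r ⟨hr0, hr1⟩
  have hflux : r ^ (n - 1) * f' r ≤ (μ / ((n : ℝ) - 1) + r / n) * r ^ (n - 1) :=
    le_of_hasDerivAt_le_of_tendsto_nhdsGT hr0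
      (fun x hx => hode x ⟨hx.1, hx.2.trans hr1⟩)
      (fun x _ => hasDerivAt_radial_barrier hn μ x)
      (fun x hx => radial_ode_rhs_le hn hβ.le hμ hlam.1 hx.1.le
        (hD0 _ (div_nonneg hx.1.le hlam.1.le)) (hDle _ (div_nonneg hx.1.le hlam.1.le))
        (hf x ⟨hx.1.le, hx.2.le.trans hr1⟩).2)
      hlim (tendsto_radial_barrier_nhdsGT_zero hn μ)
  rw [mul_comm] at hflux
  exact le_of_mul_le_mul_right hflux (by positivity)

/-- Derivative bound for the rescaled radial profile of the Dirichlet eigenfunction: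
under `(r^{n−1}f′)′ = (λ^{−1}D(r/λ) + 1) r^{n−1} f` with `0 < f ≤ 1` and
`r^{n−1}f′(r) → 0` as `r → 0⁺`, one has `f′(r) ≤ μ/(n−1) + r/n` on `(0,1]`. -/
theorem rescaled_profile_deriv_bound
    (n : ℕ) (hn : 2 ≤ n) (β μ lam : ℝ) (hβ : 1 < β) (hμ : 0 ≤ μ)
    (hlam : lam ∈ Ioc (0 : ℝ) 1)
    (D : ℝ → ℝ) (hDc : Continuous D)
    (hD0 : ∀ r : ℝ, 0 ≤ r → 0 ≤ D r)
    (hDle : ∀ r : ℝ, 0 ≤ r → D r ≤ μ * (1 + r) ^ (-β))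
    (f f' : ℝ → ℝ)
    (hC2 : ContDiffOn ℝ 2 f (Icc (0 : ℝ) 1))
    (hf : ∀ r ∈ Icc (0 : ℝ) 1, 0 < f r ∧ f r ≤ 1)
    (hderiv : ∀ r ∈ Ioc (0 : ℝ) 1, HasDerivAt f (f' r) r)
    (hode : ∀ r ∈ Ioc (0 : ℝ) 1,
      HasDerivAt (fun s : ℝ => s ^ (n - 1) * f' s)
        ((lam⁻¹ * D (r / lam) + 1) * r ^ (n - 1) * f r) r)
    (hlim : Tendsto (fun r : ℝ => r ^ (n - 1) * f' r) (nhdsWithin 0 (Ioi 0)) (nhds 0)) :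
    ∀ r ∈ Ioc (0 : ℝ) 1, f' r ≤ μ / ((n : ℝ) - 1) + r / (n : ℝ) :=
  rescaled_profile_deriv_bound_general n hn β μ lam hβ hμ hlam D hD0 hDle f f' hf hode hlim
end

section
/- Let n ≥ 2, p > 1, set p′ = p/(p−1), and let R > 0, ρ₀ ≥ 0, ρ_∞ ≥ 0, θ ∈ [0,2] satisfy (θ−2)p′ + ρ₀ + n > 0. Then there exists a constant C > 0 such that for all T ≥ 2: T^{−p′} ∫_{T/2}^{T} [ ∫₀¹ (T^{−1} + r^{θ−2})^{p′} r^{ρ₀+n−1} dr + ∫₁^{t+R} (T^{−1} + r^{−1})^{p′} r^{ρ_∞+n−1} dr ] dt ≤ C·B(T), where B(T) = T^{−2p′+ρ_∞+n+1} if p′ < ρ_∞ + n, B(T) = T^{1−p′} ln T if p′ = ρ_∞ + n, and B(T) = T^{1−p′} if p′ > ρ_∞ + n. -/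
/-!
Write `q = p′`. For `T ≥ 1` and `t ≤ T` every radius of the second inner integral satisfies
`r ≤ t + R ≤ (1 + R) T`, so `T⁻¹ ≤ (1 + R) r⁻¹` and that integrand is at most
`(2 + R)^q r^(ρ_∞+n-1-q)`; in the first one `T⁻¹ ≤ 1 ≤ r^(θ-2)`, so it is at most
`2^q r^((θ-2)q+ρ₀+n-1)`, which is integrable at `0` by hypothesis. The bracket is therefore bounded,
uniformly in `t ∈ (T/2, T]`, by a constant plus `(2 + R)^q ∫₁^{(1+R)T} r^(ρ_∞+n-1-q) dr`, and the
`t`-integral only adds a factor `T/2`. That last integral is `O(T^(ρ_∞+n-q))`, `log T + O(1)` or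
`O(1)` according to the sign of `ρ_∞ + n - q`, which gives the three regimes of `B(T)`.
-/

open MeasureTheory Set Real

noncomputable section

lemma setIntegral_Ioc_le_mul_of_norm_le {f : ℝ → ℝ} {a b M : ℝ} (hab : a ≤ b)
    (hf : ∀ t ∈ Ioc a b, ‖f t‖ ≤ M) : ∫ t in Ioc a b, f t ≤ M * (b - a) := by
  have h := norm_setIntegral_le_of_norm_le_const (μ := volume) measure_Ioc_lt_top hf
  rw [Real.volume_real_Ioc_of_le hab] at h
  exact (le_abs_self _).trans h

lemma add_rpow_mul_rpow_le {ε a q s r : ℝ} (hε₀ : 0 ≤ ε) (hε : ε ≤ 1) (ha : a ≤ 0) (hq : 0 ≤ q)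
    (hr : r ∈ Ioc (0 : ℝ) 1) : (ε + r ^ a) ^ q * r ^ (s - 1) ≤ 2 ^ q * r ^ (a * q + s - 1) := by
  have hr0 := hr.1
  have hra : 1 ≤ r ^ a := one_le_rpow_of_pos_of_le_one_of_nonpos hr0 hr.2 ha
  calc (ε + r ^ a) ^ q * r ^ (s - 1) ≤ (2 * r ^ a) ^ q * r ^ (s - 1) := by gcongr; linarith
    _ = 2 ^ q * r ^ (a * q + s - 1) := by
        rw [mul_rpow zero_le_two (rpow_nonneg hr0.le _), ← rpow_mul hr0.le, mul_assoc,
          ← rpow_add hr0]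
        ring_nf

lemma integral_Ioc_zero_one_add_rpow_mul_rpow_le {ε a q s : ℝ} (hε₀ : 0 ≤ ε) (hε : ε ≤ 1)
    (ha : a ≤ 0) (hq : 0 ≤ q) (hβ : 0 < a * q + s) :
    ∫ r in Ioc (0 : ℝ) 1, (ε + r ^ a) ^ q * r ^ (s - 1) ≤ 2 ^ q / (a * q + s) := by
  have hmajorant : IntegrableOn (fun r : ℝ => 2 ^ q * r ^ (a * q + s - 1)) (Ioc 0 1) := by
    rw [← intervalIntegrable_iff_integrableOn_Ioc_of_le zero_le_one]
    exact (intervalIntegral.intervalIntegrable_rpow' (by linarith)).const_mul _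
  calc ∫ r in Ioc (0 : ℝ) 1, (ε + r ^ a) ^ q * r ^ (s - 1)
      ≤ ∫ r in Ioc (0 : ℝ) 1, 2 ^ q * r ^ (a * q + s - 1) := by
        refine integral_mono_of_nonneg ?_ hmajorant ?_ <;>
          filter_upwards [ae_restrict_mem measurableSet_Ioc] with r hr
        · have := hr.1
          positivity
        · exact add_rpow_mul_rpow_le hε₀ hε ha hq hr
    _ = 2 ^ q / (a * q + s) := by
        rw [integral_const_mul, ← intervalIntegral.integral_of_le zero_le_one,
          integral_rpow (Or.inl (by linarith)), sub_add_cancel, one_rpow,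
          zero_rpow hβ.ne', sub_zero, mul_one_div]

lemma inv_add_inv_rpow_mul_rpow_le {T c q σ r : ℝ} (hT : 0 < T) (hc : 0 ≤ c) (hq : 0 ≤ q)
    (hr : 0 < r) (hrT : r ≤ c * T) :
    (T⁻¹ + r⁻¹) ^ q * r ^ (σ - 1) ≤ (1 + c) ^ q * r ^ (σ - 1 - q) := by
  have hTr : T⁻¹ ≤ c * r⁻¹ := by
    rw [← div_eq_mul_inv, le_div_iff₀ hr, inv_mul_le_iff₀ hT, mul_comm]
    exact hrT
  calc (T⁻¹ + r⁻¹) ^ q * r ^ (σ - 1) ≤ ((1 + c) * r⁻¹) ^ q * r ^ (σ - 1) := by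
        gcongr; linarith
    _ = (1 + c) ^ q * r ^ (σ - 1 - q) := by
        rw [mul_rpow (by linarith) (inv_nonneg.2 hr.le), inv_rpow hr.le, ← rpow_neg hr.le,
          mul_assoc, ← rpow_add hr]
        ring_nf

lemma integrableOn_Ioc_one_rpow (α b : ℝ) : IntegrableOn (fun r : ℝ => r ^ α) (Ioc 1 b) :=
  (continuousOn_id.rpow_const fun _ hr => Or.inl (one_pos.trans_le hr.1).ne').integrableOn_Icc
    |>.mono_set Ioc_subset_Icc_self

lemma integral_Ioc_one_inv_add_inv_rpow_mul_rpow_le {T c b q σ : ℝ} (hT : 0 < T) (hc : 0 ≤ c)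
    (hq : 0 ≤ q) (hb : b ≤ c * T) :
    ∫ r in Ioc (1 : ℝ) b, (T⁻¹ + r⁻¹) ^ q * r ^ (σ - 1)
      ≤ (1 + c) ^ q * ∫ r in Ioc (1 : ℝ) b, r ^ (σ - 1 - q) := by
  rw [← integral_const_mul]
  refine integral_mono_of_nonneg ?_ ((integrableOn_Ioc_one_rpow _ b).const_mul _) ?_ <;>
    filter_upwards [ae_restrict_mem measurableSet_Ioc] with r hr
  · have : 0 < r := one_pos.trans hr.1
    positivity
  · exact inv_add_inv_rpow_mul_rpow_le hT hc hq (one_pos.trans hr.1) (hr.2.trans hb)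

lemma integral_Ioc_one_rpow_le_of_neg_one_lt {α b : ℝ} (hα : -1 < α) (hb : 1 ≤ b) :
    ∫ r in Ioc (1 : ℝ) b, r ^ α ≤ b ^ (α + 1) / (α + 1) := by
  rw [← intervalIntegral.integral_of_le hb, integral_rpow (Or.inl hα), one_rpow]
  gcongr
  · linarith
  · linarith

lemma integral_Ioc_one_rpow_neg_one {b : ℝ} (hb : 1 ≤ b) :
    ∫ r in Ioc (1 : ℝ) b, r ^ (-1 : ℝ) = log b := by
  simp_rw [rpow_neg_one]
  have h0 : (0 : ℝ) ∉ uIcc 1 b := by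
    rw [uIcc_of_le hb]
    exact fun h => absurd h.1 (by norm_num)
  rw [← intervalIntegral.integral_of_le hb, integral_inv h0, div_one]

lemma integral_Ioc_one_rpow_le_of_lt_neg_one {α : ℝ} (hα : α < -1) (b : ℝ) :
    ∫ r in Ioc (1 : ℝ) b, r ^ α ≤ -1 / (α + 1) := by
  calc ∫ r in Ioc (1 : ℝ) b, r ^ α ≤ ∫ r in Ioi (1 : ℝ), r ^ α := by
        refine setIntegral_mono_set (integrableOn_Ioi_rpow_of_lt hα one_pos) ?_
          Ioc_subset_Ioi_self.eventuallyLE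
        filter_upwards [ae_restrict_mem measurableSet_Ioi] with r hr
        exact rpow_nonneg (zero_le_one.trans hr.le) _
    _ = -1 / (α + 1) := by rw [integral_Ioi_rpow_of_lt hα one_pos, one_rpow]

/-- The integral of the theorem with `q = p′`, `a = θ - 2`, `s = ρ₀ + n`, `σ = ρ_∞ + n`. -/
def F0 (q R a s σ T : ℝ) : ℝ :=
  ∫ t in Ioc (T / 2) T, ((∫ r in Ioc (0 : ℝ) 1, (T⁻¹ + r ^ a) ^ q * r ^ (s - 1)) +
    ∫ r in Ioc (1 : ℝ) (t + R), (T⁻¹ + r⁻¹) ^ q * r ^ (σ - 1))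

lemma rpow_neg_mul_F0_le {q R a s σ T : ℝ} (hq : 0 ≤ q) (hR : 0 ≤ R) (ha : a ≤ 0)
    (hβ : 0 < a * q + s) (hT : 1 ≤ T) :
    T ^ (-q) * F0 q R a s σ T
      ≤ (2 ^ q / (a * q + s) + (2 + R) ^ q * ∫ r in Ioc (1 : ℝ) ((1 + R) * T), r ^ (σ - 1 - q))
          / 2 * T ^ (1 - q) := by
  have hT0 : 0 < T := one_pos.trans_le hT
  set M := 2 ^ q / (a * q + s) + (2 + R) ^ q * ∫ r in Ioc (1 : ℝ) ((1 + R) * T), r ^ (σ - 1 - q)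
  have hF0 : F0 q R a s σ T ≤ M * (T / 2) := by
    refine (setIntegral_Ioc_le_mul_of_norm_le (M := M) (by linarith) fun t ht => ?_).trans_eq
      (by ring)
    have hinner := integral_Ioc_zero_one_add_rpow_mul_rpow_le (s := s) (inv_nonneg.2 hT0.le)
      (inv_le_one_of_one_le₀ hT) ha hq hβ
    have htR : t + R ≤ (1 + R) * T := by nlinarith [ht.2]
    have htail := integral_Ioc_one_inv_add_inv_rpow_mul_rpow_le (σ := σ) hT0
      (by linarith : 0 ≤ 1 + R) hq htR
    rw [show (1 : ℝ) + (1 + R) = 2 + R by ring] at htail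
    have hmono : ∫ r in Ioc (1 : ℝ) (t + R), r ^ (σ - 1 - q)
        ≤ ∫ r in Ioc (1 : ℝ) ((1 + R) * T), r ^ (σ - 1 - q) := by
      refine setIntegral_mono_set (integrableOn_Ioc_one_rpow _ _) ?_
        (Ioc_subset_Ioc_right htR).eventuallyLE
      filter_upwards [ae_restrict_mem measurableSet_Ioc] with r hr
      exact rpow_nonneg (zero_le_one.trans hr.1.le) _
    have hinner₀ : 0 ≤ ∫ r in Ioc (0 : ℝ) 1, (T⁻¹ + r ^ a) ^ q * r ^ (s - 1) :=
      setIntegral_nonneg measurableSet_Ioc fun r hr => by have := hr.1; positivity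
    have htail₀ : 0 ≤ ∫ r in Ioc (1 : ℝ) (t + R), (T⁻¹ + r⁻¹) ^ q * r ^ (σ - 1) :=
      setIntegral_nonneg measurableSet_Ioc fun r hr => by
        have := one_pos.trans hr.1; positivity
    rw [norm_of_nonneg (add_nonneg hinner₀ htail₀)]
    have := mul_le_mul_of_nonneg_left hmono (by positivity : (0 : ℝ) ≤ (2 + R) ^ q)
    linarith
  calc T ^ (-q) * F0 q R a s σ T ≤ T ^ (-q) * (M * (T / 2)) := by gcongr
    _ = M / 2 * T ^ (1 - q) := by
        rw [sub_eq_neg_add, rpow_add hT0, rpow_one]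
        ring

lemma F0_le_of_lt {q R a s σ : ℝ} (hq : 0 ≤ q) (hR : 0 ≤ R) (ha : a ≤ 0) (hβ : 0 < a * q + s)
    (hqσ : q < σ) :
    ∃ C > 0, ∀ T, 1 ≤ T → T ^ (-q) * F0 q R a s σ T ≤ C * T ^ (-2 * q + σ + 1) := by
  set A := 2 ^ q / (a * q + s)
  set B := (2 + R) ^ q
  set K := (1 + R) ^ (σ - q) / (σ - q)
  have hA : 0 < A := div_pos (by positivity) hβ
  have hK : 0 < K := div_pos (by positivity) (by linarith)
  refine ⟨(A + B * K) / 2, by positivity, fun T hT => ?_⟩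
  have hT0 : 0 < T := one_pos.trans_le hT
  have hJ : ∫ r in Ioc (1 : ℝ) ((1 + R) * T), r ^ (σ - 1 - q) ≤ K * T ^ (σ - q) := by
    calc ∫ r in Ioc (1 : ℝ) ((1 + R) * T), r ^ (σ - 1 - q)
        ≤ ((1 + R) * T) ^ (σ - 1 - q + 1) / (σ - 1 - q + 1) :=
          integral_Ioc_one_rpow_le_of_neg_one_lt (by linarith) (by nlinarith)
      _ = K * T ^ (σ - q) := by
          rw [show σ - 1 - q + 1 = σ - q by ring, mul_rpow (by linarith) hT0.le]
          ring
  have hA' : A ≤ A * T ^ (σ - q) := le_mul_of_one_le_right hA.le (one_le_rpow hT (by linarith))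
  calc T ^ (-q) * F0 q R a s σ T
      ≤ (A + B * ∫ r in Ioc (1 : ℝ) ((1 + R) * T), r ^ (σ - 1 - q)) / 2 * T ^ (1 - q) :=
        rpow_neg_mul_F0_le hq hR ha hβ hT
    _ ≤ (A * T ^ (σ - q) + B * (K * T ^ (σ - q))) / 2 * T ^ (1 - q) := by gcongr
    _ = (A + B * K) / 2 * T ^ (-2 * q + σ + 1) := by
        rw [show -2 * q + σ + 1 = (σ - q) + (1 - q) by ring, rpow_add hT0]
        ring

lemma F0_le_of_eq {q R a s σ : ℝ} (hq : 0 ≤ q) (hR : 0 ≤ R) (ha : a ≤ 0) (hβ : 0 < a * q + s)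
    (hqσ : q = σ) :
    ∃ C > 0, ∀ T, 2 ≤ T → T ^ (-q) * F0 q R a s σ T ≤ C * T ^ (1 - q) * log T := by
  set A := 2 ^ q / (a * q + s)
  set B := (2 + R) ^ q
  set L := A + B * log (1 + R)
  have hA : 0 < A := div_pos (by positivity) hβ
  have hL : 0 < L := by have := log_nonneg (by linarith : (1 : ℝ) ≤ 1 + R); positivity
  have hlog2 : 0 < log 2 := log_pos one_lt_two
  refine ⟨(L / log 2 + B) / 2, by positivity, fun T hT => ?_⟩
  have hT0 : 0 < T := two_pos.trans_le hT
  have hJ : ∫ r in Ioc (1 : ℝ) ((1 + R) * T), r ^ (σ - 1 - q) = log (1 + R) + log T := by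
    rw [show σ - 1 - q = -1 by rw [hqσ]; ring, integral_Ioc_one_rpow_neg_one (by nlinarith),
      log_mul (by positivity) hT0.ne']
  have hL' : L ≤ L / log 2 * log T := by
    rw [div_mul_eq_mul_div, le_div_iff₀ hlog2]
    exact mul_le_mul_of_nonneg_left (log_le_log two_pos hT) hL.le
  calc T ^ (-q) * F0 q R a s σ T
      ≤ (A + B * ∫ r in Ioc (1 : ℝ) ((1 + R) * T), r ^ (σ - 1 - q)) / 2 * T ^ (1 - q) :=
        rpow_neg_mul_F0_le hq hR ha hβ (one_le_two.trans hT)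
    _ = (L + B * log T) / 2 * T ^ (1 - q) := by rw [hJ]; ring
    _ ≤ (L / log 2 * log T + B * log T) / 2 * T ^ (1 - q) := by gcongr
    _ = (L / log 2 + B) / 2 * T ^ (1 - q) * log T := by ring

lemma F0_le_of_gt {q R a s σ : ℝ} (hq : 0 ≤ q) (hR : 0 ≤ R) (ha : a ≤ 0) (hβ : 0 < a * q + s)
    (hσq : σ < q) :
    ∃ C > 0, ∀ T, 1 ≤ T → T ^ (-q) * F0 q R a s σ T ≤ C * T ^ (1 - q) := by
  set A := 2 ^ q / (a * q + s)
  set B := (2 + R) ^ q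
  have hA : 0 < A := div_pos (by positivity) hβ
  have hK : 0 < 1 / (q - σ) := one_div_pos.2 (by linarith)
  refine ⟨(A + B * (1 / (q - σ))) / 2, by positivity, fun T hT => ?_⟩
  have hJ : ∫ r in Ioc (1 : ℝ) ((1 + R) * T), r ^ (σ - 1 - q) ≤ 1 / (q - σ) := by
    refine (integral_Ioc_one_rpow_le_of_lt_neg_one (by linarith) _).trans_eq ?_
    rw [show σ - 1 - q + 1 = -(q - σ) by ring, div_neg, neg_div, neg_neg]
  calc T ^ (-q) * F0 q R a s σ T
      ≤ (A + B * ∫ r in Ioc (1 : ℝ) ((1 + R) * T), r ^ (σ - 1 - q)) / 2 * T ^ (1 - q) :=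
        rpow_neg_mul_F0_le hq hR ha hβ hT
    _ ≤ (A + B * (1 / (q - σ))) / 2 * T ^ (1 - q) := by gcongr

theorem F0_estimate_general
    (n : ℕ) (p R ρ₀ ρinf θ : ℝ) (hp : 1 < p) (hR : 0 < R)
    (hθ : θ ∈ Icc (0 : ℝ) 2)
    (hint : (θ - 2) * (p / (p - 1)) + ρ₀ + (n : ℝ) > 0) :
    ∃ C > (0 : ℝ), ∀ T : ℝ, 2 ≤ T →
      ((p / (p - 1) < ρinf + (n : ℝ) →
        T ^ (-(p / (p - 1))) *
          (∫ t in Ioc (T / 2) T,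
            ((∫ r in Ioc (0 : ℝ) 1,
                (T⁻¹ + r ^ (θ - 2)) ^ (p / (p - 1)) * r ^ (ρ₀ + (n : ℝ) - 1)) +
             (∫ r in Ioc (1 : ℝ) (t + R),
                (T⁻¹ + r⁻¹) ^ (p / (p - 1)) * r ^ (ρinf + (n : ℝ) - 1))))
          ≤ C * T ^ (-2 * (p / (p - 1)) + ρinf + (n : ℝ) + 1)) ∧
       (p / (p - 1) = ρinf + (n : ℝ) →
        T ^ (-(p / (p - 1))) *
          (∫ t in Ioc (T / 2) T,
            ((∫ r in Ioc (0 : ℝ) 1,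
                (T⁻¹ + r ^ (θ - 2)) ^ (p / (p - 1)) * r ^ (ρ₀ + (n : ℝ) - 1)) +
             (∫ r in Ioc (1 : ℝ) (t + R),
                (T⁻¹ + r⁻¹) ^ (p / (p - 1)) * r ^ (ρinf + (n : ℝ) - 1))))
          ≤ C * T ^ (1 - p / (p - 1)) * Real.log T) ∧
       (ρinf + (n : ℝ) < p / (p - 1) →
        T ^ (-(p / (p - 1))) *
          (∫ t in Ioc (T / 2) T,
            ((∫ r in Ioc (0 : ℝ) 1,
                (T⁻¹ + r ^ (θ - 2)) ^ (p / (p - 1)) * r ^ (ρ₀ + (n : ℝ) - 1)) +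
             (∫ r in Ioc (1 : ℝ) (t + R),
                (T⁻¹ + r⁻¹) ^ (p / (p - 1)) * r ^ (ρinf + (n : ℝ) - 1))))
          ≤ C * T ^ (1 - p / (p - 1)))) := by
  set q := p / (p - 1)
  have hq : 0 ≤ q := div_nonneg (by linarith) (by linarith)
  have ha : θ - 2 ≤ 0 := by linarith [hθ.2]
  have hβ : 0 < (θ - 2) * q + (ρ₀ + n) := by linarith
  rcases lt_trichotomy q (ρinf + n) with hlt | heq | hgt
  · obtain ⟨C, hC, hF⟩ := F0_le_of_lt hq hR.le ha hβ hlt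
    refine ⟨C, hC, fun T hT =>
      ⟨fun _ => ?_, fun h => absurd h hlt.ne, fun h => absurd h hlt.not_gt⟩⟩
    exact (hF T (one_le_two.trans hT)).trans_eq (by ring_nf)
  · obtain ⟨C, hC, hF⟩ := F0_le_of_eq hq hR.le ha hβ heq
    exact ⟨C, hC, fun T hT =>
      ⟨fun h => absurd heq h.ne, fun _ => hF T hT, fun h => absurd heq h.ne'⟩⟩
  · obtain ⟨C, hC, hF⟩ := F0_le_of_gt hq hR.le ha hβ hgt
    exact ⟨C, hC, fun T hT =>
      ⟨fun h => absurd h hgt.not_gt, fun h => absurd h hgt.ne',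
        fun _ => hF T (one_le_two.trans hT)⟩⟩

/-- The `F₀` estimate: for `p′ = p/(p−1)` and `(θ−2)p′ + ρ₀ + n > 0`,
`T^{−p′}∫_{T/2}^{T}[∫₀¹(T^{−1}+r^{θ−2})^{p′}r^{ρ₀+n−1}dr + ∫₁^{t+R}(T^{−1}+r^{−1})^{p′}r^{ρ_∞+n−1}dr]dt`
is bounded by `C·B(T)` with `B(T) = T^{−2p′+ρ_∞+n+1}`, `T^{1−p′}ln T`, `T^{1−p′}` according to
whether `p′ < ρ_∞+n`, `p′ = ρ_∞+n`, `p′ > ρ_∞+n`. -/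
theorem F0_estimate
    (n : ℕ) (hn : 2 ≤ n) (p R ρ₀ ρinf θ : ℝ) (hp : 1 < p) (hR : 0 < R)
    (hρ₀ : 0 ≤ ρ₀) (hρinf : 0 ≤ ρinf) (hθ : θ ∈ Icc (0 : ℝ) 2)
    (hint : (θ - 2) * (p / (p - 1)) + ρ₀ + (n : ℝ) > 0) :
    ∃ C > (0 : ℝ), ∀ T : ℝ, 2 ≤ T →
      ((p / (p - 1) < ρinf + (n : ℝ) →
        T ^ (-(p / (p - 1))) *
          (∫ t in Ioc (T / 2) T,
            ((∫ r in Ioc (0 : ℝ) 1,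
                (T⁻¹ + r ^ (θ - 2)) ^ (p / (p - 1)) * r ^ (ρ₀ + (n : ℝ) - 1)) +
             (∫ r in Ioc (1 : ℝ) (t + R),
                (T⁻¹ + r⁻¹) ^ (p / (p - 1)) * r ^ (ρinf + (n : ℝ) - 1))))
          ≤ C * T ^ (-2 * (p / (p - 1)) + ρinf + (n : ℝ) + 1)) ∧
       (p / (p - 1) = ρinf + (n : ℝ) →
        T ^ (-(p / (p - 1))) *
          (∫ t in Ioc (T / 2) T,
            ((∫ r in Ioc (0 : ℝ) 1,
                (T⁻¹ + r ^ (θ - 2)) ^ (p / (p - 1)) * r ^ (ρ₀ + (n : ℝ) - 1)) +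
             (∫ r in Ioc (1 : ℝ) (t + R),
                (T⁻¹ + r⁻¹) ^ (p / (p - 1)) * r ^ (ρinf + (n : ℝ) - 1))))
          ≤ C * T ^ (1 - p / (p - 1)) * Real.log T) ∧
       (ρinf + (n : ℝ) < p / (p - 1) →
        T ^ (-(p / (p - 1))) *
          (∫ t in Ioc (T / 2) T,
            ((∫ r in Ioc (0 : ℝ) 1,
                (T⁻¹ + r ^ (θ - 2)) ^ (p / (p - 1)) * r ^ (ρ₀ + (n : ℝ) - 1)) +
             (∫ r in Ioc (1 : ℝ) (t + R),
                (T⁻¹ + r⁻¹) ^ (p / (p - 1)) * r ^ (ρinf + (n : ℝ) - 1))))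
          ≤ C * T ^ (1 - p / (p - 1)))) :=
  F0_estimate_general n p R ρ₀ ρinf θ hp hR hθ hint
end
end

section
/- Let n ≥ 2, β > 1, μ ≥ 0, and let D ∈ C(ℝⁿ) ∩ C^δ(B_δ) for some δ > 0 be radial with 0 ≤ D(x) ≤ μ(1+|x|)^{−β}. For each λ ∈ (0,1], let f_λ be the unique C² solution of the Dirichlet problem Δf_λ − λ^{−1}D(x/λ)f_λ = f_λ on the unit ball B₁ of ℝⁿ with f_λ = 1 on ∂B₁ (so that f_λ is radial, 0 < f_λ ≤ 1, and f_λ is nondecreasing in |x|). Then there exists a constant c > 0 such that f_λ(x) ≥ c for all λ ∈ (0,1] and all x ∈ B₁; in particular, liminf_{λ→0⁺} f_λ(0) > 0. -/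
/-!
Along a ray, the profile `u t = f_λ (t • e)` satisfies `u'' + (n - 1) u' / t = (1 + V) u` with
`V s = λ⁻¹ D (λ⁻¹ s e)`; since `u` is nondecreasing, `u'' ≤ (1 + V) u`. Integrating from `0`, where
`u' = 0` by symmetry, and using again that `u` is nondecreasing gives `u' t ≤ (t + ∫₀ᵗ V) u t`.
The rescaling `λ⁻¹ D (λ⁻¹ ·)` preserves the bound `∫₀^∞ μ (1 + s) ^ (-β) ds = μ / (β - 1)`, so
`u' ≤ (1 + μ / (β - 1)) u` on `[0, 1)` uniformly in `λ`, and Grönwall's inequality yields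
`1 = u 1 ≤ u 0 * exp (1 + μ / (β - 1))`.
-/

open MeasureTheory Set Real Filter
open scoped NNReal ENNReal

noncomputable section

/-- The Laplacian of `f : ℝⁿ → ℝ`, as the sum of the second partial derivatives. -/
noncomputable def lap {n : ℕ} (f : Eucl n → ℝ) (x : Eucl n) : ℝ :=
  ∑ i : Fin n, fderiv ℝ (fun y => fderiv ℝ f y (EuclideanSpace.single i 1)) x
    (EuclideanSpace.single i 1)

open scoped Topology

section SecondOrderInequality

variable {u V : ℝ → ℝ}

theorem deriv_sub_deriv_le_of_deriv_deriv_le {t : ℝ} (ht : 0 ≤ t)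
    (hu : ∀ s ∈ Icc 0 t, ContDiffAt ℝ 2 u s) (hmono : MonotoneOn u (Icc 0 t))
    (hV : IntegrableOn V (Icc 0 t)) (hV0 : ∀ s ∈ Ioo 0 t, 0 ≤ V s)
    (hode : ∀ s ∈ Ioo 0 t, deriv (deriv u) s ≤ (1 + V s) * u s) :
    deriv u t - deriv u 0 ≤ (t + ∫ s in 0..t, V s) * u t := by
  have hu' : ∀ s ∈ Icc 0 t, ContDiffAt ℝ 1 (deriv u) s :=
    fun s hs => (hu s hs).derivWithin (by norm_num)
  have hle : ∀ s ∈ Ioo 0 t, deriv (deriv u) s ≤ (1 + V s) * u t := fun s hs =>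
    (hode s hs).trans <| mul_le_mul_of_nonneg_left
      (hmono (Ioo_subset_Icc_self hs) (right_mem_Icc.2 ht) hs.2.le) (by linarith [hV0 s hs])
  calc deriv u t - deriv u 0 ≤ ∫ s in 0..t, (1 + V s) * u t :=
        intervalIntegral.sub_le_integral_of_hasDeriv_right_of_le ht
          (fun s hs => (hu' s hs).continuousAt.continuousWithinAt)
          (fun s hs => ((hu' s (Ioo_subset_Icc_self hs)).differentiableAt one_ne_zero).hasDerivAt
            |>.hasDerivWithinAt)
          (((integrableOn_const (by simp)).add hV).mul_const _) hle
    _ = (t + ∫ s in 0..t, V s) * u t := by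
        rw [intervalIntegral.integral_mul_const, intervalIntegral.integral_add
          intervalIntegrable_const ((intervalIntegrable_iff_integrableOn_Icc_of_le ht).2 hV)]
        simp

theorem le_mul_exp_of_deriv_deriv_le {b A : ℝ} (hb : 0 ≤ b) (hcont : ContinuousOn u (Icc 0 b))
    (hu : ∀ t ∈ Ico 0 b, ContDiffAt ℝ 2 u t) (hmono : MonotoneOn u (Icc 0 b)) (hu0 : 0 ≤ u 0)
    (hu'0 : deriv u 0 = 0) (hV : IntegrableOn V (Icc 0 b)) (hV0 : ∀ s ∈ Ioo 0 b, 0 ≤ V s)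
    (hA : ∀ t ∈ Ico 0 b, ∫ s in 0..t, V s ≤ A)
    (hode : ∀ s ∈ Ioo 0 b, deriv (deriv u) s ≤ (1 + V s) * u s) :
    u b ≤ u 0 * exp ((b + A) * b) := by
  have hderiv : ∀ t ∈ Ico 0 b, deriv u t ≤ (b + A) * u t + 0 := by
    intro t ht
    have hsub : Icc 0 t ⊆ Ico 0 b := Icc_subset_Ico_right ht.2
    have h := deriv_sub_deriv_le_of_deriv_deriv_le ht.1 (fun s hs => hu s (hsub hs))
      (hmono.mono (hsub.trans Ico_subset_Icc_self)) (hV.mono_set (hsub.trans Ico_subset_Icc_self))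
      (fun s hs => hV0 s ⟨hs.1, hs.2.trans ht.2⟩) (fun s hs => hode s ⟨hs.1, hs.2.trans ht.2⟩)
    have hut : 0 ≤ u t := hu0.trans (hmono (left_mem_Icc.2 hb) (Ico_subset_Icc_self ht) ht.1)
    rw [hu'0, sub_zero] at h
    calc deriv u t ≤ (t + ∫ s in 0..t, V s) * u t := h
      _ ≤ (b + A) * u t := mul_le_mul_of_nonneg_right (add_le_add ht.2.le (hA t ht)) hut
      _ = (b + A) * u t + 0 := (add_zero _).symm
  have h := le_gronwallBound_of_liminf_deriv_right_le hcont
    (fun t ht r hr => ((hu t ht).differentiableAt (by norm_num)).hasDerivAt.hasDerivWithinAt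
      |>.liminf_right_slope_le hr) le_rfl hderiv b (right_mem_Icc.2 hb)
  rwa [gronwallBound_ε0, sub_zero] at h

end SecondOrderInequality

theorem integral_one_add_rpow_neg_le {β t : ℝ} (hβ : 1 < β) (ht : 0 ≤ t) :
    ∫ s in 0..t, (1 + s) ^ (-β) ≤ (β - 1)⁻¹ := by
  have h0 : (0 : ℝ) ∉ uIcc 1 (1 + t) := by
    rw [uIcc_of_le (by linarith)]; exact fun h => by linarith [h.1]
  rw [intervalIntegral.integral_comp_add_left (fun x => x ^ (-β)), add_zero,
    integral_rpow (Or.inr ⟨by linarith, h0⟩), one_rpow]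
  have : 0 ≤ (1 + t) ^ (-β + 1) := rpow_nonneg (by linarith) _
  have hβ' : (β - 1)⁻¹ * (-β + 1) = -1 := by
    rw [show -β + 1 = -(β - 1) by ring, mul_neg, inv_mul_cancel₀ (by linarith)]
  rw [div_le_iff_of_neg (by linarith), hβ']
  linarith

theorem integral_inv_mul_one_add_inv_mul_rpow_neg_le {β lam t : ℝ} (hβ : 1 < β) (hlam : 0 < lam)
    (ht : 0 ≤ t) : ∫ s in 0..t, lam⁻¹ * (1 + lam⁻¹ * s) ^ (-β) ≤ (β - 1)⁻¹ := by
  rw [intervalIntegral.integral_const_mul, ← smul_eq_mul,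
    intervalIntegral.smul_integral_comp_mul_left (fun s => (1 + s) ^ (-β)), mul_zero]
  exact integral_one_add_rpow_neg_le hβ (by positivity)

theorem integral_inv_mul_comp_inv_smul_le {E : Type*} [NormedAddCommGroup E] [NormedSpace ℝ E]
    {D : E → ℝ} {β μ lam t : ℝ} (hDc : Continuous D) (hDle : ∀ x, D x ≤ μ * (1 + ‖x‖) ^ (-β))
    (hβ : 1 < β) (hμ : 0 ≤ μ) (hlam : 0 < lam) {e : E} (he : ‖e‖ = 1) (ht : 0 ≤ t) :
    ∫ s in 0..t, lam⁻¹ * D (lam⁻¹ • s • e) ≤ μ / (β - 1) := by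
  have hbound : ∀ s ∈ Icc 0 t,
      lam⁻¹ * D (lam⁻¹ • s • e) ≤ μ * (lam⁻¹ * (1 + lam⁻¹ * s) ^ (-β)) := by
    intro s hs
    have hnorm : ‖lam⁻¹ • s • e‖ = lam⁻¹ * s := by
      rw [smul_smul, norm_smul, he, mul_one, Real.norm_of_nonneg (by have := hs.1; positivity)]
    calc lam⁻¹ * D (lam⁻¹ • s • e) ≤ lam⁻¹ * (μ * (1 + ‖lam⁻¹ • s • e‖) ^ (-β)) :=
          mul_le_mul_of_nonneg_left (hDle _) (by positivity)
      _ = μ * (lam⁻¹ * (1 + lam⁻¹ * s) ^ (-β)) := by rw [hnorm]; ring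
  have hcont : ContinuousOn (fun s : ℝ => μ * (lam⁻¹ * (1 + lam⁻¹ * s) ^ (-β))) (uIcc 0 t) := by
    refine continuousOn_const.mul (continuousOn_const.mul (ContinuousOn.rpow_const ?_ ?_))
    · fun_prop
    · intro s hs
      rw [uIcc_of_le ht] at hs
      left; have := hs.1; positivity
  calc ∫ s in 0..t, lam⁻¹ * D (lam⁻¹ • s • e)
      ≤ ∫ s in 0..t, μ * (lam⁻¹ * (1 + lam⁻¹ * s) ^ (-β)) :=
        intervalIntegral.integral_mono_on ht (Continuous.intervalIntegrable (by fun_prop) _ _)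
          hcont.intervalIntegrable hbound
    _ ≤ μ * (β - 1)⁻¹ := by
        rw [intervalIntegral.integral_const_mul]
        exact mul_le_mul_of_nonneg_left
          (integral_inv_mul_one_add_inv_mul_rpow_neg_le hβ hlam ht) hμ

theorem ContDiffAt.deriv_deriv_comp_add_smul {𝕜 E F : Type*} [NontriviallyNormedField 𝕜]
    [NormedAddCommGroup E] [NormedSpace 𝕜 E] [NormedAddCommGroup F] [NormedSpace 𝕜 F]
    {f : E → F} {x : E} (hf : ContDiffAt 𝕜 2 f x) (y : E) :
    deriv (deriv fun s : 𝕜 => f (x + s • y)) 0 = fderiv 𝕜 (fun z => fderiv 𝕜 f z y) x y := by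
  have hev : ∀ᶠ s : 𝕜 in 𝓝 0, ContDiffAt 𝕜 2 f (x + s • y) :=
    (Continuous.tendsto' (by fun_prop) 0 x (by simp)).eventually (hf.eventually (by simp))
  have hderiv : deriv (fun s : 𝕜 => f (x + s • y)) =ᶠ[𝓝 0] fun s => fderiv 𝕜 f (x + s • y) y :=
    hev.mono fun s hs => (hs.differentiableAt (by norm_num)).deriv_comp_add_smul
  have hg : DifferentiableAt 𝕜 (fun z => fderiv 𝕜 f z y) (x + (0 : 𝕜) • y) := by
    rw [zero_smul, add_zero]
    exact ((hf.fderiv_right (m := 1) le_rfl).differentiableAt one_ne_zero).clm_apply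
      (differentiableAt_const y)
  rw [hderiv.deriv_eq, hg.deriv_comp_add_smul, zero_smul, add_zero]

theorem deriv_deriv_comp_sqrt_sq_add_sq {u : ℝ → ℝ} {t : ℝ} (ht : 0 < t)
    (hu : ContDiffAt ℝ 2 u t) :
    deriv (deriv fun s => u √(t ^ 2 + s ^ 2)) 0 = deriv u t / t := by
  set r : ℝ → ℝ := fun s => √(t ^ 2 + s ^ 2)
  have hpos : ∀ s, 0 < t ^ 2 + s ^ 2 := fun s => by positivity
  have hr0 : r 0 = t := by simp [r, sqrt_sq ht.le]
  have hr : ∀ s, HasDerivAt r (s / r s) s := by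
    intro s
    have := ((hasDerivAt_pow 2 s).const_add (t ^ 2)).sqrt (hpos s).ne'
    convert this using 1
    simp only [r]
    field_simp
    norm_num [mul_comm]
  have hev : ∀ᶠ s in 𝓝 0, DifferentiableAt ℝ u (r s) := by
    have := (hu.eventually (by simp)).mono fun y hy => hy.differentiableAt (by norm_num)
    exact (hr 0).continuousAt.tendsto.eventually (hr0 ▸ this)
  have hderiv : deriv (fun s => u (r s)) =ᶠ[𝓝 0] fun s => deriv u (r s) / r s * s :=
    hev.mono fun s hs => (hs.hasDerivAt.comp s (hr s)).deriv.trans (by ring)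
  have hu' : DifferentiableAt ℝ (deriv u) (r 0) := by
    rw [hr0]; exact (hu.derivWithin (m := 1) le_rfl).differentiableAt one_ne_zero
  have := ((hu'.hasDerivAt.comp 0 (hr 0)).div (hr 0) (hr0 ▸ ht.ne')).mul (hasDerivAt_id 0)
  rw [hderiv.deriv_eq]
  refine this.deriv.trans ?_
  simp [hr0]

section Radial

variable {n : ℕ}

theorem norm_smul_single_add_smul_single {i j : Fin n} (hij : i ≠ j) (a b : ℝ) :
    ‖a • EuclideanSpace.single i (1 : ℝ) + b • EuclideanSpace.single j 1‖ = √(a ^ 2 + b ^ 2) := by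
  have horth :
      inner ℝ (a • EuclideanSpace.single i (1 : ℝ)) (b • EuclideanSpace.single j 1) = 0 := by
    simp [real_inner_smul_left, real_inner_smul_right, EuclideanSpace.inner_single_left, hij.symm]
  rw [← sqrt_sq (norm_nonneg _), norm_add_sq_real, horth]
  simp [norm_smul]

theorem lap_smul_single_of_radial {f : Eucl n → ℝ} (hrad : ∀ x y : Eucl n, ‖x‖ = ‖y‖ → f x = f y)
    (i : Fin n) {t : ℝ} (ht : 0 < t)
    (hf : ContDiffAt ℝ 2 f (t • EuclideanSpace.single i 1)) :
    lap f (t • EuclideanSpace.single i 1) =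
      deriv (deriv fun s => f (s • EuclideanSpace.single i 1)) t +
        (n - 1) * (deriv (fun s => f (s • EuclideanSpace.single i 1)) t / t) := by
  set e : Fin n → Eucl n := fun j => EuclideanSpace.single j 1
  set u : ℝ → ℝ := fun s => f (s • e i)
  have hu : ContDiffAt ℝ 2 u t := hf.comp t (by fun_prop)
  have hii : fderiv ℝ (fun y => fderiv ℝ f y (e i)) (t • e i) (e i) = deriv (deriv u) t := by
    have hshift : deriv (fun s => u (t + s)) = fun s => deriv u (t + s) :=
      funext (deriv_comp_const_add u t)
    have hline : (fun s => f (t • e i + s • e i)) = fun s => u (t + s) :=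
      funext fun s => by simp only [u, add_smul]
    rw [← hf.deriv_deriv_comp_add_smul, hline, hshift, deriv_comp_const_add, add_zero]
  have hji : ∀ j ≠ i, fderiv ℝ (fun y => fderiv ℝ f y (e j)) (t • e i) (e j) = deriv u t / t := by
    intro j hj
    have hline : (fun s => f (t • e i + s • e j)) = fun s => u √(t ^ 2 + s ^ 2) := by
      funext s
      apply hrad
      simp [e, norm_smul_single_add_smul_single hj.symm, norm_smul, abs_of_nonneg (sqrt_nonneg _)]
    rw [← hf.deriv_deriv_comp_add_smul, hline, deriv_deriv_comp_sqrt_sq_add_sq ht hu]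
  rw [lap, ← Finset.add_sum_erase _ _ (Finset.mem_univ i), hii,
    Finset.sum_congr rfl fun j hj => hji j (Finset.ne_of_mem_erase hj), Finset.sum_const,
    Finset.card_erase_of_mem (Finset.mem_univ i), Finset.card_univ, Fintype.card_fin, nsmul_eq_mul,
    Nat.cast_sub i.pos, Nat.cast_one]

end Radial

theorem le_mul_exp_of_radial_of_lap_eq {n : ℕ} {f P : Eucl n → ℝ} {A : ℝ} (i : Fin n)
    (hf : ContDiffOn ℝ 2 f (Metric.closedBall 0 1))
    (hrad : ∀ x y : Eucl n, ‖x‖ = ‖y‖ → f x = f y)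
    (hmono : ∀ x ∈ Metric.closedBall (0 : Eucl n) 1, ∀ y ∈ Metric.closedBall (0 : Eucl n) 1,
      ‖x‖ ≤ ‖y‖ → f x ≤ f y)
    (hf0 : 0 ≤ f 0) (hP : Continuous P) (hP0 : ∀ x, 0 ≤ P x)
    (hA : ∀ t ∈ Ico (0 : ℝ) 1, ∫ s in 0..t, P (s • EuclideanSpace.single i 1) ≤ A)
    (heq : ∀ x ∈ Metric.ball (0 : Eucl n) 1, lap f x = (1 + P x) * f x) :
    f (EuclideanSpace.single i 1) ≤ f 0 * exp (1 + A) := by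
  set e : Eucl n := EuclideanSpace.single i 1
  set u : ℝ → ℝ := fun t => f (t • e)
  have hnorm : ∀ t : ℝ, ‖t • e‖ = |t| := fun t => by simp [e, norm_smul]
  have hclosed : ∀ t ∈ Icc (-1 : ℝ) 1, t • e ∈ Metric.closedBall (0 : Eucl n) 1 := fun t ht => by
    simpa [hnorm] using abs_le.2 ht
  have hball : ∀ t ∈ Ioo (-1 : ℝ) 1, t • e ∈ Metric.ball (0 : Eucl n) 1 := fun t ht => by
    simpa [hnorm] using abs_lt.2 ht
  have hfu : ∀ t ∈ Ioo (-1 : ℝ) 1, ContDiffAt ℝ 2 f (t • e) := fun t ht =>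
    hf.contDiffAt (Metric.closedBall_mem_nhds_of_mem (hball t ht))
  have hu : ∀ t ∈ Ioo (-1 : ℝ) 1, ContDiffAt ℝ 2 u t := fun t ht =>
    (hfu t ht).comp t (by fun_prop)
  have humono : MonotoneOn u (Icc 0 1) := fun a ha b hb hab =>
    hmono _ (hclosed a ⟨by linarith [ha.1], ha.2⟩) _ (hclosed b ⟨by linarith [hb.1], hb.2⟩)
      (by rwa [hnorm, hnorm, abs_of_nonneg ha.1, abs_of_nonneg hb.1])
  have hu'0 : deriv u 0 = 0 := by
    have heven : (fun t => u (-t)) = u := funext fun t => hrad _ _ (by rw [hnorm, hnorm, abs_neg])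
    have h := deriv_comp_neg u (0 : ℝ)
    rw [heven, neg_zero] at h
    linarith
  have hode : ∀ t ∈ Ioo (0 : ℝ) 1, deriv (deriv u) t ≤ (1 + P (t • e)) * u t := by
    intro t ht
    have hu' : 0 ≤ deriv u t := by
      rw [← derivWithin_of_isOpen isOpen_Ioo ht]
      exact (humono.mono Ioo_subset_Icc_self).derivWithin_nonneg
    have hn : (1 : ℝ) ≤ n := by exact_mod_cast i.pos
    have hlap := lap_smul_single_of_radial hrad i ht.1 (hfu t ⟨by linarith [ht.1], ht.2⟩)
    rw [heq _ (hball t ⟨by linarith [ht.1], ht.2⟩)] at hlap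
    linarith [mul_nonneg (sub_nonneg.2 hn) (div_nonneg hu' ht.1.le)]
  have h := le_mul_exp_of_deriv_deriv_le zero_le_one
    (hf.continuousOn.comp (by fun_prop) fun t ht => hclosed t ⟨by linarith [ht.1], ht.2⟩)
    (fun t ht => hu t ⟨by linarith [ht.1], ht.2⟩) humono (by simpa [u] using hf0) hu'0
    (Continuous.integrableOn_Icc (by fun_prop)) (fun s _ => hP0 _) hA hode
  simpa [u] using h

theorem dirichlet_family_uniform_lower_bound_general
    (n : ℕ) (hn : 2 ≤ n) (β μ : ℝ) (hβ : 1 < β) (hμ : 0 ≤ μ)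
    (D : Eucl n → ℝ) (hDc : Continuous D)
    (hD0 : ∀ x, 0 ≤ D x) (hDle : ∀ x, D x ≤ μ * (1 + ‖x‖) ^ (-β))
    (f : ℝ → Eucl n → ℝ)
    (hfC2 : ∀ lam ∈ Ioc (0 : ℝ) 1, ContDiffOn ℝ 2 (f lam) (Metric.closedBall 0 1))
    (hfeq : ∀ lam ∈ Ioc (0 : ℝ) 1, ∀ x ∈ Metric.ball (0 : Eucl n) 1,
      lap (f lam) x - lam⁻¹ * D ((lam⁻¹ : ℝ) • x) * f lam x = f lam x)
    (hfbd : ∀ lam ∈ Ioc (0 : ℝ) 1, ∀ x ∈ Metric.sphere (0 : Eucl n) 1, f lam x = 1)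
    (hfrad : ∀ lam ∈ Ioc (0 : ℝ) 1, ∀ x y : Eucl n, ‖x‖ = ‖y‖ → f lam x = f lam y)
    (hfpos : ∀ lam ∈ Ioc (0 : ℝ) 1, ∀ x ∈ Metric.closedBall (0 : Eucl n) 1,
      0 < f lam x ∧ f lam x ≤ 1)
    (hfmono : ∀ lam ∈ Ioc (0 : ℝ) 1, ∀ x ∈ Metric.closedBall (0 : Eucl n) 1,
      ∀ y ∈ Metric.closedBall (0 : Eucl n) 1, ‖x‖ ≤ ‖y‖ → f lam x ≤ f lam y) :
    ∃ c > (0 : ℝ),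
      (∀ lam ∈ Ioc (0 : ℝ) 1, ∀ x ∈ Metric.closedBall (0 : Eucl n) 1, c ≤ f lam x) ∧
      0 < Filter.liminf (fun lam : ℝ => f lam 0) (nhdsWithin 0 (Ioi 0)) := by
  set c := exp (-(1 + μ / (β - 1)))
  have hcenter : ∀ lam ∈ Ioc (0 : ℝ) 1, c ≤ f lam 0 := by
    intro lam hlam
    have h := le_mul_exp_of_radial_of_lap_eq (P := fun x => lam⁻¹ * D (lam⁻¹ • x)) ⟨0, by omega⟩
      (hfC2 lam hlam) (hfrad lam hlam) (hfmono lam hlam) (hfpos lam hlam 0 (by simp)).1.le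
      (by fun_prop) (fun x => mul_nonneg (inv_nonneg.2 hlam.1.le) (hD0 _))
      (fun t ht => integral_inv_mul_comp_inv_smul_le hDc hDle hβ hμ hlam.1 (by simp) ht.1)
      (fun x hx => by linarith [hfeq lam hlam x hx])
    rwa [hfbd lam hlam _ (by simp), ← div_le_iff₀ (exp_pos _), one_div, ← exp_neg] at h
  refine ⟨c, exp_pos _, fun lam hlam x hx =>
    (hcenter lam hlam).trans (hfmono lam hlam 0 (by simp) x hx (by simp)), ?_⟩
  have hev : ∀ᶠ lam in 𝓝[>] (0 : ℝ), lam ∈ Ioc (0 : ℝ) 1 := Ioc_mem_nhdsGT one_pos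
  have hle_one : ∀ᶠ lam in 𝓝[>] (0 : ℝ), f lam 0 ≤ 1 :=
    hev.mono fun lam hlam => (hfpos lam hlam 0 (by simp)).2
  exact (exp_pos _).trans_le <|
    le_liminf_of_le (isCoboundedUnder_ge_of_eventually_le _ hle_one) (hev.mono hcenter)

/-- Uniform lower bound for the rescaled Dirichlet eigenfunctions
`Δf_λ − λ^{−1}D(x/λ)f_λ = f_λ` on `B₁`, `f_λ = 1` on `∂B₁`: there is `c > 0` with
`f_λ ≥ c` on `B₁` uniformly in `λ ∈ (0,1]`; in particular `liminf_{λ→0⁺} f_λ(0) > 0`. -/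
theorem dirichlet_family_uniform_lower_bound
    (n : ℕ) (hn : 2 ≤ n) (β μ : ℝ) (hβ : 1 < β) (hμ : 0 ≤ μ)
    (D : Eucl n → ℝ) (hDc : Continuous D)
    (hDholder : ∃ (δ Ch : ℝ≥0), 0 < δ ∧ HolderOnWith Ch δ D (Metric.ball 0 δ))
    (hDrad : ∀ x y : Eucl n, ‖x‖ = ‖y‖ → D x = D y)
    (hD0 : ∀ x, 0 ≤ D x) (hDle : ∀ x, D x ≤ μ * (1 + ‖x‖) ^ (-β))
    (f : ℝ → Eucl n → ℝ)
    (hfC2 : ∀ lam ∈ Ioc (0 : ℝ) 1, ContDiffOn ℝ 2 (f lam) (Metric.closedBall 0 1))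
    (hfeq : ∀ lam ∈ Ioc (0 : ℝ) 1, ∀ x ∈ Metric.ball (0 : Eucl n) 1,
      lap (f lam) x - lam⁻¹ * D ((lam⁻¹ : ℝ) • x) * f lam x = f lam x)
    (hfbd : ∀ lam ∈ Ioc (0 : ℝ) 1, ∀ x ∈ Metric.sphere (0 : Eucl n) 1, f lam x = 1)
    (hfrad : ∀ lam ∈ Ioc (0 : ℝ) 1, ∀ x y : Eucl n, ‖x‖ = ‖y‖ → f lam x = f lam y)
    (hfpos : ∀ lam ∈ Ioc (0 : ℝ) 1, ∀ x ∈ Metric.closedBall (0 : Eucl n) 1,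
      0 < f lam x ∧ f lam x ≤ 1)
    (hfmono : ∀ lam ∈ Ioc (0 : ℝ) 1, ∀ x ∈ Metric.closedBall (0 : Eucl n) 1,
      ∀ y ∈ Metric.closedBall (0 : Eucl n) 1, ‖x‖ ≤ ‖y‖ → f lam x ≤ f lam y) :
    ∃ c > (0 : ℝ),
      (∀ lam ∈ Ioc (0 : ℝ) 1, ∀ x ∈ Metric.closedBall (0 : Eucl n) 1, c ≤ f lam x) ∧
      0 < Filter.liminf (fun lam : ℝ => f lam 0) (nhdsWithin 0 (Ioi 0)) :=
  dirichlet_family_uniform_lower_bound_general n hn β μ hβ hμ D hDc hD0 hDle f hfC2 hfeq hfbd hfrad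
    hfpos hfmono
end
end
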